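/- arXiv:1601.07965 — 16 statements merged into one kernel-verified Lean document; each statement's English description precedes it below -/
import Mathlib

section
/- In the synchronous two-agent fixed–fixed model: for every t ≥ 1, x(2t−1) ≥ x(2t+1), and for every t ≥ 0, x(2t) ≤ x(2t+2) ≤ x(2t+1); analogously, for every t ≥ 1, y(2t−1) ≤ y(2t+1), and for every t ≥ 0, y(2t) ≥ y(2t+2) ≥ y(2t+1). Moreover, all these inequalities are strict if and only if 0 < r1 < 1, 0 < r2 < 1, and k2 > k1. -/
/-- monotonicity of the odd/even subsequences in the synchronous
two-agent fixed–fixed model, with strictness iff 0 < r1 < 1, 0 < r2 < 1 and k1 < k2.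
(The condition "for t ≥ 1, x(2t−1) ≥ x(2t+1)" is written with shifted index as
"for all t ≥ 0, x(2t+1) ≥ x(2t+3)".) -/
theorem fixed_fixed_sync_oscillation
    (k1 k2 r1 r2 : ℝ) (hk : k1 ≤ k2)
    (hr1 : r1 ∈ Set.Icc (0:ℝ) 1) (hr2 : r2 ∈ Set.Icc (0:ℝ) 1)
    (x y : ℕ → ℝ) (hx0 : x 0 = k1) (hy0 : y 0 = k2)
    (hx : ∀ t : ℕ, x (t + 1) = (1 - r1) * k1 + r1 * y t)
    (hy : ∀ t : ℕ, y (t + 1) = (1 - r2) * k2 + r2 * x t) :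
    ((∀ t : ℕ, x (2 * t + 1) ≥ x (2 * t + 3)) ∧
     (∀ t : ℕ, x (2 * t) ≤ x (2 * t + 2)) ∧
     (∀ t : ℕ, x (2 * t + 2) ≤ x (2 * t + 1)) ∧
     (∀ t : ℕ, y (2 * t + 1) ≤ y (2 * t + 3)) ∧
     (∀ t : ℕ, y (2 * t) ≥ y (2 * t + 2)) ∧
     (∀ t : ℕ, y (2 * t + 2) ≥ y (2 * t + 1))) ∧
    (((∀ t : ℕ, x (2 * t + 1) > x (2 * t + 3)) ∧
      (∀ t : ℕ, x (2 * t) < x (2 * t + 2)) ∧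
      (∀ t : ℕ, x (2 * t + 2) < x (2 * t + 1)) ∧
      (∀ t : ℕ, y (2 * t + 1) < y (2 * t + 3)) ∧
      (∀ t : ℕ, y (2 * t) > y (2 * t + 2)) ∧
      (∀ t : ℕ, y (2 * t + 2) > y (2 * t + 1))) ↔
     (0 < r1 ∧ r1 < 1 ∧ 0 < r2 ∧ r2 < 1 ∧ k1 < k2)) := by
  obtain ⟨hr1l, hr1u⟩ := hr1
  obtain ⟨hr2l, hr2u⟩ := hr2
  have hd : (0:ℝ) ≤ k2 - k1 := sub_nonneg.2 hk
  have hp : (0:ℝ) ≤ r1 * r2 := mul_nonneg hr1l hr2l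
  have Hx : ∀ n m : ℕ, m = n + 1 → x m = (1 - r1) * k1 + r1 * y n := by
    rintro n m rfl; exact hx n
  have Hy : ∀ n m : ℕ, m = n + 1 → y m = (1 - r2) * k2 + r2 * x n := by
    rintro n m rfl; exact hy n
  -- closed forms for one-step differences at even times
  have key : ∀ t : ℕ, x (2*t+1) - x (2*t) = (r1*r2)^t * (r1*(k2-k1)) ∧
      y (2*t+1) - y (2*t) = -((r1*r2)^t * (r2*(k2-k1))) := by
    intro t
    induction t with
    | zero =>
      have h1 : x 1 = (1 - r1) * k1 + r1 * y 0 := Hx 0 1 rfl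
      have h2 : y 1 = (1 - r2) * k2 + r2 * x 0 := Hy 0 1 rfl
      constructor
      · show x 1 - x 0 = _
        rw [h1, hx0, hy0]; ring
      · show y 1 - y 0 = _
        rw [h2, hx0, hy0]; ring
    | succ t ih =>
      have hy1 : y (2*t+2) = (1 - r2) * k2 + r2 * x (2*t+1) := Hy (2*t+1) (2*t+2) (by omega)
      have hy0' : y (2*t+1) = (1 - r2) * k2 + r2 * x (2*t) := Hy (2*t) (2*t+1) rfl
      have hx1 : x (2*t+2) = (1 - r1) * k1 + r1 * y (2*t+1) := Hx (2*t+1) (2*t+2) (by omega)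
      have hx2 : x (2*t+3) = (1 - r1) * k1 + r1 * y (2*t+2) := Hx (2*t+2) (2*t+3) (by omega)
      have e1 : 2*(t+1)+1 = 2*t+3 := by omega
      have e2 : 2*(t+1) = 2*t+2 := by omega
      rw [e1, e2]
      constructor
      · linear_combination hx2 - hx1 + r1 * hy1 - r1 * hy0' + (r1*r2) * ih.1
      · linear_combination (r1*r2) * ih.2 + r2 * hx1 - r2 * (Hx (2*t) (2*t+1) rfl)
          + (Hy (2*t+2) (2*t+3) (by omega)) - (Hy (2*t+1) (2*t+2) (by omega))
  have hb1 : ∀ t : ℕ, y (2*t+2) - y (2*t+1) = (r1*r2)^(t+1) * (k2-k1) := by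
    intro t
    linear_combination (Hy (2*t+1) (2*t+2) (by omega)) - (Hy (2*t) (2*t+1) rfl) + r2 * (key t).1
  have ha1 : ∀ t : ℕ, x (2*t+2) - x (2*t+1) = -((r1*r2)^(t+1) * (k2-k1)) := by
    intro t
    linear_combination (Hx (2*t+1) (2*t+2) (by omega)) - (Hx (2*t) (2*t+1) rfl) + r1 * (key t).2
  have hxeven : ∀ t : ℕ, x (2*t+2) - x (2*t) = (r1*r2)^t * (r1 * (1-r2) * (k2-k1)) := by
    intro t
    linear_combination ha1 t + (key t).1
  have hxodd : ∀ t : ℕ, x (2*t+3) - x (2*t+1) = -((r1*r2)^(t+1) * ((1-r1) * (k2-k1))) := by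
    intro t
    linear_combination (Hx (2*t+2) (2*t+3) (by omega)) - (Hx (2*t+1) (2*t+2) (by omega))
      + r1 * hb1 t + ha1 t
  have hyeven : ∀ t : ℕ, y (2*t+2) - y (2*t) = -((r1*r2)^t * (r2 * (1-r1) * (k2-k1))) := by
    intro t
    linear_combination hb1 t + (key t).2
  have hyodd : ∀ t : ℕ, y (2*t+3) - y (2*t+1) = (r1*r2)^(t+1) * ((1-r2) * (k2-k1)) := by
    intro t
    linear_combination (Hy (2*t+2) (2*t+3) (by omega)) - (Hy (2*t+1) (2*t+2) (by omega))
      + r2 * ha1 t + hb1 t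
  constructor
  · refine ⟨fun t => ?_, fun t => ?_, fun t => ?_, fun t => ?_, fun t => ?_, fun t => ?_⟩
    · have h := hxodd t
      have : (0:ℝ) ≤ (r1*r2)^(t+1) * ((1-r1) * (k2-k1)) :=
        mul_nonneg (pow_nonneg hp _) (mul_nonneg (by linarith) hd)
      linarith
    · have h := hxeven t
      have : (0:ℝ) ≤ (r1*r2)^t * (r1 * (1-r2) * (k2-k1)) :=
        mul_nonneg (pow_nonneg hp _) (mul_nonneg (mul_nonneg hr1l (by linarith)) hd)
      linarith
    · have h := ha1 t
      have : (0:ℝ) ≤ (r1*r2)^(t+1) * (k2-k1) := mul_nonneg (pow_nonneg hp _) hd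
      linarith
    · have h := hyodd t
      have : (0:ℝ) ≤ (r1*r2)^(t+1) * ((1-r2) * (k2-k1)) :=
        mul_nonneg (pow_nonneg hp _) (mul_nonneg (by linarith) hd)
      linarith
    · have h := hyeven t
      have : (0:ℝ) ≤ (r1*r2)^t * (r2 * (1-r1) * (k2-k1)) :=
        mul_nonneg (pow_nonneg hp _) (mul_nonneg (mul_nonneg hr2l (by linarith)) hd)
      linarith
    · have h := hb1 t
      have : (0:ℝ) ≤ (r1*r2)^(t+1) * (k2-k1) := mul_nonneg (pow_nonneg hp _) hd
      linarith
  · constructor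
    · rintro ⟨h1, h2, _h3, h4, _h5, _h6⟩
      -- from x 2 < x 1 : (r1*r2) * (k2-k1) > 0
      have ha := ha1 0
      norm_num at ha
      have hpd : 0 < r1 * r2 * (k2 - k1) := by
        have := _h3 0
        norm_num at this
        linarith
      have hppos : 0 < r1 * r2 := by
        rcases hp.lt_or_eq with h | h
        · exact h
        · exfalso; rw [← h] at hpd; simp at hpd
      have hdpos : 0 < k2 - k1 := by
        rcases hd.lt_or_eq with h | h
        · exact h
        · exfalso; rw [← h] at hpd; simp at hpd
      have hr1pos : 0 < r1 := by
        rcases hr1l.lt_or_eq with h | h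
        · exact h
        · exfalso; rw [← h] at hppos; simp at hppos
      have hr2pos : 0 < r2 := by
        rcases hr2l.lt_or_eq with h | h
        · exact h
        · exfalso; rw [← h] at hppos; simp at hppos
      have hr1lt : r1 < 1 := by
        have hxo := hxodd 0
        have hs := h1 0
        norm_num at hxo hs ⊢
        nlinarith
      have hr2lt : r2 < 1 := by
        have hyo := hyodd 0
        have hs := h4 0
        norm_num at hyo hs ⊢
        nlinarith
      exact ⟨hr1pos, hr1lt, hr2pos, hr2lt, by linarith⟩
    · rintro ⟨hr1pos, hr1lt, hr2pos, hr2lt, hklt⟩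
      have hppos : 0 < r1 * r2 := mul_pos hr1pos hr2pos
      have hdpos : 0 < k2 - k1 := by linarith
      refine ⟨fun t => ?_, fun t => ?_, fun t => ?_, fun t => ?_, fun t => ?_, fun t => ?_⟩
      · have h := hxodd t
        have : (0:ℝ) < (r1*r2)^(t+1) * ((1-r1) * (k2-k1)) :=
          mul_pos (pow_pos hppos _) (mul_pos (by linarith) hdpos)
        linarith
      · have h := hxeven t
        have : (0:ℝ) < (r1*r2)^t * (r1 * (1-r2) * (k2-k1)) :=
          mul_pos (pow_pos hppos _) (mul_pos (mul_pos hr1pos (by linarith)) hdpos)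
        linarith
      · have h := ha1 t
        have : (0:ℝ) < (r1*r2)^(t+1) * (k2-k1) := mul_pos (pow_pos hppos _) hdpos
        linarith
      · have h := hyodd t
        have : (0:ℝ) < (r1*r2)^(t+1) * ((1-r2) * (k2-k1)) :=
          mul_pos (pow_pos hppos _) (mul_pos (by linarith) hdpos)
        linarith
      · have h := hyeven t
        have : (0:ℝ) < (r1*r2)^t * (r2 * (1-r1) * (k2-k1)) :=
          mul_pos (pow_pos hppos _) (mul_pos (mul_pos hr2pos (by linarith)) hdpos)
        linarith
      · have h := hb1 t
        have : (0:ℝ) < (r1*r2)^(t+1) * (k2-k1) := mul_pos (pow_pos hppos _) hdpos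
        linarith
end

section
/- In the synchronous two-agent fixed–fixed model, for every t ≥ 0 the consecutive difference satisfies x(t+1) − x(t) = (r1·r2)^{⌊t/2⌋} · (x(1) − x(0)) if t is even, and x(t+1) − x(t) = (r1·r2)^{⌊t/2⌋} · (x(2) − x(1)) if t is odd. -/
/-- the consecutive differences of x in the synchronous two-agent
fixed–fixed model decay geometrically with ratio r1·r2. -/
theorem fixed_fixed_sync_consecutive_difference
    (k1 k2 r1 r2 : ℝ) (hk : k1 ≤ k2)
    (hr1 : r1 ∈ Set.Icc (0:ℝ) 1) (hr2 : r2 ∈ Set.Icc (0:ℝ) 1)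
    (x y : ℕ → ℝ) (hx0 : x 0 = k1) (hy0 : y 0 = k2)
    (hx : ∀ t : ℕ, x (t + 1) = (1 - r1) * k1 + r1 * y t)
    (hy : ∀ t : ℕ, y (t + 1) = (1 - r2) * k2 + r2 * x t) :
    ∀ t : ℕ, x (t + 1) - x t =
      (r1 * r2) ^ (t / 2) * (if Even t then x 1 - x 0 else x 2 - x 1) := by
  have key : ∀ t : ℕ, x (t + 3) - x (t + 2) = (r1 * r2) * (x (t + 1) - x t) := by
    intro t
    have h1 := hx (t + 2)
    have h2 := hx (t + 1)
    have h3 := hy (t + 1)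
    have h4 := hy t
    rw [h1, h2, h3, h4]
    ring
  intro t
  induction t using Nat.twoStepInduction with
  | zero => simp
  | one => simp
  | more n ih _ =>
    have hdiv : (n + 2) / 2 = n / 2 + 1 := by omega
    have heven : Even (n + 2) ↔ Even n := by
      simp [Nat.even_add]
    rw [show n + 2 + 1 = n + 3 from rfl, key n, ih, hdiv, pow_succ]
    rw [if_congr heven rfl rfl]
    ring
end

section
/- In the two-agent fixed–fixed model with arbitrary action times, if r1·r2 < 1, then x(t) converges as t → ∞ to ((1−r1)·k1 + r1·(1−r2)·k2)/(1 − r1·r2), and y(t) converges as t → ∞ to ((1−r2)·k2 + r2·(1−r1)·k1)/(1 − r1·r2). -/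
/-!
Measured from the fixed point `(Lx, Ly)` of the two update rules, agent 1's deviation is
replaced by `r1` times agent 2's deviation whenever agent 1 acts, and vice versa. With
`r1, r2 ≤ 1` the larger of the two deviations never grows, and since both agents act
infinitely often, a bound on one deviation is eventually passed on to the other and back,
picking up a factor `r1 * r2 < 1` on each round trip.
-/

open Filter Topology

structure FollowsOn (T : Set ℕ) (r : ℝ) (z w : ℕ → ℝ) : Prop where
  update : ∀ t, t + 1 ∈ T → w (t + 1) = r * z t
  hold : ∀ t, t + 1 ∉ T → w (t + 1) = w t

namespace FollowsOn

variable {T T₁ T₂ : Set ℕ} {r a b : ℝ} {u v w z : ℕ → ℝ}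

theorem eventually_abs_le (h : FollowsOn T r z w) (hr : 0 ≤ r) (hT : T.Infinite) {c : ℝ}
    (hz : ∀ᶠ t in atTop, |z t| ≤ c) : ∀ᶠ t in atTop, |w t| ≤ r * c := by
  obtain ⟨N, hN⟩ := eventually_atTop.1 hz
  obtain ⟨s, hsT, hNs⟩ := hT.exists_gt N
  have hstep : ∀ t, N ≤ t → |r * z t| ≤ r * c := fun t ht => by
    rw [abs_mul, abs_of_nonneg hr]
    exact mul_le_mul_of_nonneg_left (hN t ht) hr
  refine eventually_atTop.2 ⟨s, fun t hst => ?_⟩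
  induction t, hst using Nat.le_induction with
  | base =>
    obtain ⟨t, rfl⟩ : ∃ t, s = t + 1 := ⟨s - 1, by omega⟩
    rw [h.update t hsT]
    exact hstep t (by omega)
  | succ t hst ih =>
    by_cases ht : t + 1 ∈ T
    · rw [h.update t ht]
      exact hstep t (by omega)
    · rwa [h.hold t ht]

theorem antitone_max_abs (hu : FollowsOn T₁ a v u) (hv : FollowsOn T₂ b u v)
    (ha : a ∈ Set.Icc (0 : ℝ) 1) (hb : b ∈ Set.Icc (0 : ℝ) 1) :
    Antitone fun t => max |u t| |v t| := by
  have shrink : ∀ r ∈ Set.Icc (0 : ℝ) 1, ∀ s : ℝ, |r * s| ≤ |s| := fun r hr s => by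
    rw [abs_mul, abs_of_nonneg hr.1]
    exact mul_le_of_le_one_left (abs_nonneg s) hr.2
  refine antitone_nat_of_succ_le fun t => max_le ?_ ?_
  · by_cases ht : t + 1 ∈ T₁
    · rw [hu.update t ht]
      exact (shrink a ha _).trans (le_max_right _ _)
    · rw [hu.hold t ht]
      exact le_max_left _ _
  · by_cases ht : t + 1 ∈ T₂
    · rw [hv.update t ht]
      exact (shrink b hb _).trans (le_max_left _ _)
    · rw [hv.hold t ht]
      exact le_max_right _ _

theorem eventually_abs_le_pow (hu : FollowsOn T₁ a v u) (hv : FollowsOn T₂ b u v)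
    (ha : 0 ≤ a) (hb : 0 ≤ b) (hT₁ : T₁.Infinite) (hT₂ : T₂.Infinite) {C : ℝ}
    (hC : ∀ᶠ t in atTop, |u t| ≤ C) (n : ℕ) :
    ∀ᶠ t in atTop, |u t| ≤ (a * b) ^ n * C := by
  induction n with
  | zero => simpa using hC
  | succ n ih =>
    have := hu.eventually_abs_le ha hT₁ (hv.eventually_abs_le hb hT₂ ih)
    convert this using 3
    ring

theorem tendsto_zero (hu : FollowsOn T₁ a v u) (hv : FollowsOn T₂ b u v)
    (ha : a ∈ Set.Icc (0 : ℝ) 1) (hb : b ∈ Set.Icc (0 : ℝ) 1) (hab : a * b < 1)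
    (hT₁ : T₁.Infinite) (hT₂ : T₂.Infinite) : Tendsto u atTop (𝓝 0) := by
  set C := max |u 0| |v 0|
  have hC : ∀ t, |u t| ≤ C := fun t =>
    (le_max_left _ _).trans (antitone_max_abs hu hv ha hb (Nat.zero_le t))
  have hpow : Tendsto (fun n => (a * b) ^ n * C) atTop (𝓝 0) := by
    simpa using (tendsto_pow_atTop_nhds_zero_of_lt_one (mul_nonneg ha.1 hb.1) hab).mul_const C
  rw [Metric.tendsto_nhds]
  intro ε hε
  obtain ⟨n, hn⟩ := (hpow.eventually (gt_mem_nhds hε)).exists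
  filter_upwards [eventually_abs_le_pow hu hv ha.1 hb.1 hT₁ hT₂ (.of_forall hC) n] with t ht
  rw [Real.dist_eq, sub_zero]
  exact ht.trans_lt hn

end FollowsOn

theorem fixed_fixed_convergence_general
    (k1 k2 r1 r2 : ℝ)
    (hr1 : r1 ∈ Set.Icc (0:ℝ) 1) (hr2 : r2 ∈ Set.Icc (0:ℝ) 1)
    (hr : r1 * r2 < 1)
    (T1 T2 : Set ℕ)
    (hT1inf : T1.Infinite) (hT2inf : T2.Infinite)
    (x y : ℕ → ℝ)
    (hxn : ∀ t : ℕ, (t + 1) ∉ T1 → x (t + 1) = x t)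
    (hyn : ∀ t : ℕ, (t + 1) ∉ T2 → y (t + 1) = y t)
    (hxa : ∀ t : ℕ, (t + 1) ∈ T1 → x (t + 1) = (1 - r1) * k1 + r1 * y t)
    (hya : ∀ t : ℕ, (t + 1) ∈ T2 → y (t + 1) = (1 - r2) * k2 + r2 * x t) :
    Filter.Tendsto x Filter.atTop
      (nhds (((1 - r1) * k1 + r1 * (1 - r2) * k2) / (1 - r1 * r2))) ∧
    Filter.Tendsto y Filter.atTop
      (nhds (((1 - r2) * k2 + r2 * (1 - r1) * k1) / (1 - r1 * r2))) := by
  set Lx := ((1 - r1) * k1 + r1 * (1 - r2) * k2) / (1 - r1 * r2)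
  set Ly := ((1 - r2) * k2 + r2 * (1 - r1) * k1) / (1 - r1 * r2)
  have hden : 1 - r1 * r2 ≠ 0 := by linarith
  have hx : Lx * (1 - r1 * r2) = _ := div_mul_cancel₀ _ hden
  have hy : Ly * (1 - r1 * r2) = _ := div_mul_cancel₀ _ hden
  have hLx : Lx = (1 - r1) * k1 + r1 * Ly :=
    mul_right_cancel₀ hden (by linear_combination hx - r1 * hy)
  have hLy : Ly = (1 - r2) * k2 + r2 * Lx :=
    mul_right_cancel₀ hden (by linear_combination hy - r2 * hx)
  have hu : FollowsOn T1 r1 (fun t => y t - Ly) (fun t => x t - Lx) :=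
    ⟨fun t h => by rw [hxa t h, hLx]; ring, fun t h => by rw [hxn t h]⟩
  have hv : FollowsOn T2 r2 (fun t => x t - Lx) (fun t => y t - Ly) :=
    ⟨fun t h => by rw [hya t h, hLy]; ring, fun t h => by rw [hyn t h]⟩
  constructor
  · simpa using (hu.tendsto_zero hv hr1 hr2 hr hT1inf hT2inf).add_const Lx
  · rw [mul_comm] at hr
    simpa using (hv.tendsto_zero hu hr2 hr1 hr hT2inf hT1inf).add_const Ly

/-- in the two-agent fixed–fixed model with arbitrary action times,
if r1·r2 < 1 then both action sequences converge, to the stated limits. -/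
theorem fixed_fixed_convergence
    (k1 k2 r1 r2 : ℝ) (hk : k1 ≤ k2)
    (hr1 : r1 ∈ Set.Icc (0:ℝ) 1) (hr2 : r2 ∈ Set.Icc (0:ℝ) 1)
    (hr : r1 * r2 < 1)
    (T1 T2 : Set ℕ) (h01 : 0 ∈ T1) (h02 : 0 ∈ T2) (hU : T1 ∪ T2 = Set.univ)
    (hT1inf : T1.Infinite) (hT2inf : T2.Infinite)
    (x y : ℕ → ℝ) (hx0 : x 0 = k1) (hy0 : y 0 = k2)
    (hxn : ∀ t : ℕ, (t + 1) ∉ T1 → x (t + 1) = x t)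
    (hyn : ∀ t : ℕ, (t + 1) ∉ T2 → y (t + 1) = y t)
    (hxa : ∀ t : ℕ, (t + 1) ∈ T1 → x (t + 1) = (1 - r1) * k1 + r1 * y t)
    (hya : ∀ t : ℕ, (t + 1) ∈ T2 → y (t + 1) = (1 - r2) * k2 + r2 * x t) :
    Filter.Tendsto x Filter.atTop
      (nhds (((1 - r1) * k1 + r1 * (1 - r2) * k2) / (1 - r1 * r2))) ∧
    Filter.Tendsto y Filter.atTop
      (nhds (((1 - r2) * k2 + r2 * (1 - r1) * k1) / (1 - r1 * r2))) :=
  fixed_fixed_convergence_general k1 k2 r1 r2 hr1 hr2 hr T1 T2 hT1inf hT2inf x y hxn hyn hxa hya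
end

section
/- In the two-agent floating–floating model with arbitrary action times, if 0 < r1 + r2 < 2, then the sequences x(t) and y(t) both converge as t → ∞, and they converge to the same limit. -/
open Filter

/-- A nonnegative, nonincreasing sequence that contracts by a factor `c < 1`
at infinitely many steps tends to zero. -/
lemma aux_contract_tendsto_zero (a : ℕ → ℝ)
    (hmono : ∀ s t : ℕ, s ≤ t → a t ≤ a s) (hnn : ∀ t, 0 ≤ a t)
    (c : ℝ) (hc0 : 0 ≤ c) (hc1 : c < 1)
    (S : Set ℕ) (hS : S.Infinite)
    (hstep : ∀ t : ℕ, (t + 1) ∈ S → a (t + 1) ≤ c * a t) :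
    Tendsto a atTop (nhds 0) := by
  have key : ∀ n : ℕ, ∃ N : ℕ, a N ≤ c ^ n * a 0 := by
    intro n
    induction n with
    | zero => exact ⟨0, by simp⟩
    | succ n ih =>
      obtain ⟨N, hN⟩ := ih
      obtain ⟨s, hsS, hs⟩ := hS.exists_gt N
      have hs1 : 1 ≤ s := Nat.one_le_iff_ne_zero.mpr (by omega)
      obtain ⟨t, rfl⟩ : ∃ t, s = t + 1 := ⟨s - 1, by omega⟩
      refine ⟨t + 1, ?_⟩
      have h1 : a (t + 1) ≤ c * a t := hstep t hsS
      have h2 : a t ≤ a N := hmono N t (by omega)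
      calc a (t + 1) ≤ c * a t := h1
        _ ≤ c * a N := by nlinarith
        _ ≤ c * (c ^ n * a 0) := by nlinarith
        _ = c ^ (n + 1) * a 0 := by ring
  rw [Metric.tendsto_atTop]
  intro ε hε
  have hlim : Tendsto (fun n => c ^ n * a 0) atTop (nhds 0) := by
    simpa using (tendsto_pow_atTop_nhds_zero_of_lt_one hc0 hc1).mul_const (a 0)
  obtain ⟨n, hn⟩ := (Metric.tendsto_atTop.mp hlim ε hε) |>.imp (fun n h => h n le_rfl) |> id
  have hn' : |c ^ n * a 0 - 0| < ε := hn
  obtain ⟨N, hN⟩ := key n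
  refine ⟨N, fun t ht => ?_⟩
  have h1 : a t ≤ a N := hmono N t ht
  have h2 : 0 ≤ c ^ n * a 0 := mul_nonneg (pow_nonneg hc0 n) (hnn 0)
  rw [Real.dist_eq, sub_zero, abs_of_nonneg (hnn t)]
  rw [sub_zero, abs_of_nonneg h2] at hn'
  linarith

/-- in the two-agent floating–floating model with arbitrary action
times, if 0 < r1 + r2 < 2 then both sequences converge, to a common limit. -/
theorem float_float_convergence_common_limit
    (k1 k2 r1 r2 : ℝ) (hk : k1 ≤ k2)
    (hr1 : r1 ∈ Set.Icc (0:ℝ) 1) (hr2 : r2 ∈ Set.Icc (0:ℝ) 1)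
    (hsum0 : 0 < r1 + r2) (hsum2 : r1 + r2 < 2)
    (T1 T2 : Set ℕ) (h01 : 0 ∈ T1) (h02 : 0 ∈ T2) (hU : T1 ∪ T2 = Set.univ)
    (hT1inf : T1.Infinite) (hT2inf : T2.Infinite)
    (x y : ℕ → ℝ) (hx0 : x 0 = k1) (hy0 : y 0 = k2)
    (hxn : ∀ t : ℕ, (t + 1) ∉ T1 → x (t + 1) = x t)
    (hyn : ∀ t : ℕ, (t + 1) ∉ T2 → y (t + 1) = y t)
    (hxa : ∀ t : ℕ, (t + 1) ∈ T1 → x (t + 1) = (1 - r1) * x t + r1 * y t)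
    (hya : ∀ t : ℕ, (t + 1) ∈ T2 → y (t + 1) = (1 - r2) * y t + r2 * x t) :
    ∃ L : ℝ, Filter.Tendsto x Filter.atTop (nhds L) ∧
      Filter.Tendsto y Filter.atTop (nhds L) := by
  obtain ⟨hr10, hr11⟩ := hr1
  obtain ⟨hr20, hr21⟩ := hr2
  set m : ℕ → ℝ := fun t => min (x t) (y t) with hm_def
  set M : ℕ → ℝ := fun t => max (x t) (y t) with hM_def
  set a : ℕ → ℝ := fun t => M t - m t with ha_def
  -- one-step bounds: new values stay in the old interval
  have hxb : ∀ t, m t ≤ x (t + 1) ∧ x (t + 1) ≤ M t := by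
    intro t
    by_cases h : (t + 1) ∈ T1
    · rw [hxa t h]
      have h1 := min_le_left (x t) (y t)
      have h2 := min_le_right (x t) (y t)
      have h3 := le_max_left (x t) (y t)
      have h4 := le_max_right (x t) (y t)
      constructor <;> simp only [hm_def, hM_def] <;> nlinarith
    · rw [hxn t h]
      exact ⟨min_le_left _ _, le_max_left _ _⟩
  have hyb : ∀ t, m t ≤ y (t + 1) ∧ y (t + 1) ≤ M t := by
    intro t
    by_cases h : (t + 1) ∈ T2
    · rw [hya t h]
      have h1 := min_le_left (x t) (y t)
      have h2 := min_le_right (x t) (y t)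
      have h3 := le_max_left (x t) (y t)
      have h4 := le_max_right (x t) (y t)
      constructor <;> simp only [hm_def, hM_def] <;> nlinarith
    · rw [hyn t h]
      exact ⟨min_le_right _ _, le_max_right _ _⟩
  have hm_mono : Monotone m :=
    monotone_nat_of_le_succ fun t => le_min (hxb t).1 (hyb t).1
  have hM_anti : Antitone M :=
    antitone_nat_of_succ_le fun t => max_le (hxb t).2 (hyb t).2
  have ha_anti : ∀ s t : ℕ, s ≤ t → a t ≤ a s := by
    intro s t hst
    simp only [ha_def]
    have := hm_mono hst
    have := hM_anti hst
    linarith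
  have ha_nn : ∀ t, 0 ≤ a t := by
    intro t
    simp only [ha_def, hm_def, hM_def]
    have : min (x t) (y t) ≤ max (x t) (y t) := min_le_max
    linarith
  have ha_eq : ∀ t, a t = |y t - x t| := by
    intro t
    simp only [ha_def, hm_def, hM_def]
    exact max_sub_min_eq_abs (x t) (y t)
  -- contraction
  have ha_tendsto : Tendsto a atTop (nhds 0) := by
    have hcase : 0 < r1 ∨ 0 < r2 := by
      by_contra h
      push_neg at h
      linarith [h.1, h.2]
    have habs1 : |1 - r1 - r2| < 1 := abs_lt.mpr ⟨by linarith, by linarith⟩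
    have habs0 : (0:ℝ) ≤ |1 - r1 - r2| := abs_nonneg _
    rcases hcase with hpos | hpos
    · -- contraction at steps in T1
      set c : ℝ := max (1 - r1) |1 - r1 - r2| with hc_def
      refine aux_contract_tendsto_zero a ha_anti ha_nn c
        (le_trans habs0 (le_max_right _ _)) (max_lt (by linarith) habs1) T1 hT1inf ?_
      intro t ht
      rw [ha_eq (t + 1), ha_eq t, hxa t ht]
      by_cases h2 : (t + 1) ∈ T2
      · rw [hya t h2]
        have : y (t+1) - x (t+1) = (1 - r1 - r2) * (y t - x t) := by
          rw [hya t h2, hxa t ht]; ring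
        have heq : (1 - r2) * y t + r2 * x t - ((1 - r1) * x t + r1 * y t)
            = (1 - r1 - r2) * (y t - x t) := by ring
        rw [heq, abs_mul]
        exact mul_le_mul_of_nonneg_right (le_max_right _ _) (abs_nonneg _)
      · rw [hyn t h2]
        have heq : y t - ((1 - r1) * x t + r1 * y t) = (1 - r1) * (y t - x t) := by ring
        rw [heq, abs_mul, abs_of_nonneg (by linarith : (0:ℝ) ≤ 1 - r1)]
        exact mul_le_mul_of_nonneg_right (le_max_left _ _) (abs_nonneg _)
    · -- contraction at steps in T2
      set c : ℝ := max (1 - r2) |1 - r1 - r2| with hc_def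
      refine aux_contract_tendsto_zero a ha_anti ha_nn c
        (le_trans habs0 (le_max_right _ _)) (max_lt (by linarith) habs1) T2 hT2inf ?_
      intro t ht
      rw [ha_eq (t + 1), ha_eq t, hya t ht]
      by_cases h1 : (t + 1) ∈ T1
      · rw [hxa t h1]
        have heq : (1 - r2) * y t + r2 * x t - ((1 - r1) * x t + r1 * y t)
            = (1 - r1 - r2) * (y t - x t) := by ring
        rw [heq, abs_mul]
        exact mul_le_mul_of_nonneg_right (le_max_right _ _) (abs_nonneg _)
      · rw [hxn t h1]
        have heq : (1 - r2) * y t + r2 * x t - x t = (1 - r2) * (y t - x t) := by ring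
        rw [heq, abs_mul, abs_of_nonneg (by linarith : (0:ℝ) ≤ 1 - r2)]
        exact mul_le_mul_of_nonneg_right (le_max_left _ _) (abs_nonneg _)
  -- m converges (monotone, bounded above by M 0)
  have hbdd : BddAbove (Set.range m) := by
    refine ⟨M 0, ?_⟩
    rintro _ ⟨t, rfl⟩
    calc m t ≤ M t := by
          simp only [hm_def, hM_def]
          exact (min_le_max : min (x t) (y t) ≤ max (x t) (y t))
      _ ≤ M 0 := hM_anti (Nat.zero_le t)
  have hm_tendsto : Tendsto m atTop (nhds (⨆ t, m t)) := tendsto_atTop_ciSup hm_mono hbdd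
  set L : ℝ := ⨆ t, m t with hL_def
  have hM_tendsto : Tendsto M atTop (nhds L) := by
    have : Tendsto (fun t => m t + a t) atTop (nhds (L + 0)) := hm_tendsto.add ha_tendsto
    simpa [ha_def] using this
  refine ⟨L, ?_, ?_⟩
  · refine tendsto_of_tendsto_of_tendsto_of_le_of_le hm_tendsto hM_tendsto
      (fun t => min_le_left _ _) (fun t => le_max_left _ _)
  · refine tendsto_of_tendsto_of_tendsto_of_le_of_le hm_tendsto hM_tendsto
      (fun t => min_le_right _ _) (fun t => le_max_right _ _)
end

section
/- In the synchronous two-agent floating–floating model, if 0 < r1 + r2 < 2, then x(t) and y(t) both converge as t → ∞ to the common limit (r2·k1 + r1·k2)/(r1 + r2), which equals (1/2)·(k1 + k2 + (k2 − k1)·(r1 − r2)/(r1 + r2)). -/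
/-- in the synchronous two-agent floating–floating model with
0 < r1 + r2 < 2, both sequences converge to (r2·k1 + r1·k2)/(r1 + r2), which
equals (1/2)·(k1 + k2 + (k2 − k1)·(r1 − r2)/(r1 + r2)). -/
theorem float_float_sync_limit
    (k1 k2 r1 r2 : ℝ) (hk : k1 ≤ k2)
    (hr1 : r1 ∈ Set.Icc (0:ℝ) 1) (hr2 : r2 ∈ Set.Icc (0:ℝ) 1)
    (hsum0 : 0 < r1 + r2) (hsum2 : r1 + r2 < 2)
    (x y : ℕ → ℝ) (hx0 : x 0 = k1) (hy0 : y 0 = k2)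
    (hx : ∀ t : ℕ, x (t + 1) = (1 - r1) * x t + r1 * y t)
    (hy : ∀ t : ℕ, y (t + 1) = (1 - r2) * y t + r2 * x t) :
    Filter.Tendsto x Filter.atTop (nhds ((r2 * k1 + r1 * k2) / (r1 + r2))) ∧
    Filter.Tendsto y Filter.atTop (nhds ((r2 * k1 + r1 * k2) / (r1 + r2))) ∧
    (r2 * k1 + r1 * k2) / (r1 + r2) =
      (1 / 2) * (k1 + k2 + (k2 - k1) * (r1 - r2) / (r1 + r2)) := by
  have hs : r1 + r2 ≠ 0 := ne_of_gt hsum0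
  -- invariant and difference formulas
  have key : ∀ t : ℕ, r2 * x t + r1 * y t = r2 * k1 + r1 * k2 ∧
      y t - x t = (1 - (r1 + r2)) ^ t * (k2 - k1) := by
    intro t
    induction t with
    | zero => simp [hx0, hy0]
    | succ n ih =>
      obtain ⟨h1, h2⟩ := ih
      constructor
      · rw [hx n, hy n]; ring_nf; ring_nf at h1; linarith
      · rw [hx n, hy n, pow_succ]
        have : (1 - (r1 + r2)) ^ n * (k2 - k1) = y n - x n := h2.symm
        nlinarith [h2]
  -- explicit formulas
  have hxf : ∀ t, x t = ((r2 * k1 + r1 * k2) - r1 * ((1 - (r1 + r2)) ^ t * (k2 - k1))) / (r1 + r2) := by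
    intro t
    obtain ⟨h1, h2⟩ := key t
    field_simp
    linear_combination h1 - r1 * h2
  have hyf : ∀ t, y t = ((r2 * k1 + r1 * k2) + r2 * ((1 - (r1 + r2)) ^ t * (k2 - k1))) / (r1 + r2) := by
    intro t
    obtain ⟨h1, h2⟩ := key t
    field_simp
    linear_combination h1 + r2 * h2
  have habs : |1 - (r1 + r2)| < 1 := by
    rw [abs_lt]; constructor <;> linarith
  have hpow : Filter.Tendsto (fun t : ℕ => (1 - (r1 + r2)) ^ t) Filter.atTop (nhds 0) :=
    tendsto_pow_atTop_nhds_zero_of_abs_lt_one habs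
  have hx_lim : Filter.Tendsto x Filter.atTop (nhds ((r2 * k1 + r1 * k2) / (r1 + r2))) := by
    have : Filter.Tendsto (fun t : ℕ => ((r2 * k1 + r1 * k2) - r1 * ((1 - (r1 + r2)) ^ t * (k2 - k1))) / (r1 + r2))
        Filter.atTop (nhds (((r2 * k1 + r1 * k2) - r1 * (0 * (k2 - k1))) / (r1 + r2))) := by
      exact (((tendsto_const_nhds).sub ((tendsto_const_nhds).mul (hpow.mul tendsto_const_nhds))).div_const _)
    simpa [hxf] using this.congr (fun t => (hxf t).symm)
  have hy_lim : Filter.Tendsto y Filter.atTop (nhds ((r2 * k1 + r1 * k2) / (r1 + r2))) := by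
    have : Filter.Tendsto (fun t : ℕ => ((r2 * k1 + r1 * k2) + r2 * ((1 - (r1 + r2)) ^ t * (k2 - k1))) / (r1 + r2))
        Filter.atTop (nhds (((r2 * k1 + r1 * k2) + r2 * (0 * (k2 - k1))) / (r1 + r2))) := by
      exact (((tendsto_const_nhds).add ((tendsto_const_nhds).mul (hpow.mul tendsto_const_nhds))).div_const _)
    simpa [hyf] using this.congr (fun t => (hyf t).symm)
  refine ⟨hx_lim, hy_lim, ?_⟩
  field_simp
  ring
end

section
/- In the two-agent floating–floating model with arbitrary action times, if r1 + r2 ≤ 1, then y(t) ≥ x(t) for every t ≥ 0. -/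
/-- in the two-agent floating–floating model with arbitrary action
times, if r1 + r2 ≤ 1 then y(t) ≥ x(t) for all t. -/
theorem float_float_order_preserved
    (k1 k2 r1 r2 : ℝ) (hk : k1 ≤ k2)
    (hr1 : r1 ∈ Set.Icc (0:ℝ) 1) (hr2 : r2 ∈ Set.Icc (0:ℝ) 1)
    (hsum : r1 + r2 ≤ 1)
    (T1 T2 : Set ℕ) (h01 : 0 ∈ T1) (h02 : 0 ∈ T2) (hU : T1 ∪ T2 = Set.univ)
    (hT1inf : T1.Infinite) (hT2inf : T2.Infinite)
    (x y : ℕ → ℝ) (hx0 : x 0 = k1) (hy0 : y 0 = k2)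
    (hxn : ∀ t : ℕ, (t + 1) ∉ T1 → x (t + 1) = x t)
    (hyn : ∀ t : ℕ, (t + 1) ∉ T2 → y (t + 1) = y t)
    (hxa : ∀ t : ℕ, (t + 1) ∈ T1 → x (t + 1) = (1 - r1) * x t + r1 * y t)
    (hya : ∀ t : ℕ, (t + 1) ∈ T2 → y (t + 1) = (1 - r2) * y t + r2 * x t) :
    ∀ t : ℕ, y t ≥ x t := by
  obtain ⟨hr10, hr11⟩ := hr1
  obtain ⟨hr20, hr21⟩ := hr2
  intro t
  induction t with
  | zero => rw [hx0, hy0]; exact hk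
  | succ t ih =>
    by_cases h1 : (t + 1) ∈ T1 <;> by_cases h2 : (t + 1) ∈ T2
    · rw [hxa t h1, hya t h2]
      nlinarith [ih]
    · rw [hxa t h1, hyn t h2]
      nlinarith [ih]
    · rw [hxn t h1, hya t h2]
      nlinarith [ih]
    · rw [hxn t h1, hyn t h2]; exact ih
end

section
/- In the two-agent floating–floating model with arbitrary action times, if r1 + r2 ≥ 1, then: y(0) ≥ x(0); for every t ≥ 1 with t ∈ T1 ∩ T2, if y(t−1) ≥ x(t−1) then y(t) ≤ x(t), and if y(t−1) ≤ x(t−1) then y(t) ≥ x(t); and for every t ≥ 1 with t not in T1 ∩ T2, if y(t−1) ≥ x(t−1) then y(t) ≥ x(t), and if y(t−1) ≤ x(t−1) then y(t) ≤ x(t). In words, the relative order of x and y flips exactly at the times when both agents act. -/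
/-- in the two-agent floating–floating model with arbitrary action
times and r1 + r2 ≥ 1, the relative order of x and y flips exactly at the times
when both agents act. -/
theorem float_float_order_flips
    (k1 k2 r1 r2 : ℝ) (hk : k1 ≤ k2)
    (hr1 : r1 ∈ Set.Icc (0:ℝ) 1) (hr2 : r2 ∈ Set.Icc (0:ℝ) 1)
    (hsum : 1 ≤ r1 + r2)
    (T1 T2 : Set ℕ) (h01 : 0 ∈ T1) (h02 : 0 ∈ T2) (hU : T1 ∪ T2 = Set.univ)
    (hT1inf : T1.Infinite) (hT2inf : T2.Infinite)
    (x y : ℕ → ℝ) (hx0 : x 0 = k1) (hy0 : y 0 = k2)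
    (hxn : ∀ t : ℕ, (t + 1) ∉ T1 → x (t + 1) = x t)
    (hyn : ∀ t : ℕ, (t + 1) ∉ T2 → y (t + 1) = y t)
    (hxa : ∀ t : ℕ, (t + 1) ∈ T1 → x (t + 1) = (1 - r1) * x t + r1 * y t)
    (hya : ∀ t : ℕ, (t + 1) ∈ T2 → y (t + 1) = (1 - r2) * y t + r2 * x t) :
    y 0 ≥ x 0 ∧
    (∀ t : ℕ, (t + 1) ∈ T1 ∩ T2 →
      (y t ≥ x t → y (t + 1) ≤ x (t + 1)) ∧
      (y t ≤ x t → y (t + 1) ≥ x (t + 1))) ∧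
    (∀ t : ℕ, (t + 1) ∉ T1 ∩ T2 →
      (y t ≥ x t → y (t + 1) ≥ x (t + 1)) ∧
      (y t ≤ x t → y (t + 1) ≤ x (t + 1))) := by
  obtain ⟨hr1l, hr1r⟩ := hr1
  obtain ⟨hr2l, hr2r⟩ := hr2
  refine ⟨by rw [hx0, hy0]; exact hk, ?_, ?_⟩
  · intro t ⟨h1, h2⟩
    rw [hxa t h1, hya t h2]
    constructor <;> intro h <;> nlinarith
  · intro t h
    by_cases h1 : (t + 1) ∈ T1
    · have h2 : (t + 1) ∉ T2 := fun h2 => h ⟨h1, h2⟩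
      rw [hxa t h1, hyn t h2]
      constructor <;> intro hle <;> nlinarith
    · have h2 : (t + 1) ∈ T2 := by
        have : (t+1) ∈ T1 ∪ T2 := hU ▸ Set.mem_univ _
        exact this.resolve_left h1
      rw [hxn t h1, hya t h2]
      constructor <;> intro hle <;> nlinarith
end

section
/- In the two-agent fixed–floating model with arbitrary action times (agent 1 fixed, agent 2 floating), if r2 > 0 and r1 + r2 ≤ 1, then y(t+1) ≤ y(t) for every t ≥ 0, and x(t+1) ≤ x(t) for every t ≥ t_{1,1}, where t_{1,1} denotes the smallest positive element of T1. -/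
/-- in the two-agent fixed–floating model (agent 1 fixed, agent 2
floating) with arbitrary action times, if r2 > 0 and r1 + r2 ≤ 1, then y is
non-increasing everywhere and x is non-increasing from t₁₁, the smallest
positive element of T1, onwards. -/
theorem fixed_float_monotone
    (k1 k2 r1 r2 : ℝ) (hk : k1 ≤ k2)
    (hr1 : r1 ∈ Set.Icc (0:ℝ) 1) (hr2 : r2 ∈ Set.Icc (0:ℝ) 1)
    (hr2pos : 0 < r2) (hsum : r1 + r2 ≤ 1)
    (T1 T2 : Set ℕ) (h01 : 0 ∈ T1) (h02 : 0 ∈ T2) (hU : T1 ∪ T2 = Set.univ)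
    (hT1inf : T1.Infinite) (hT2inf : T2.Infinite)
    (x y : ℕ → ℝ) (hx0 : x 0 = k1) (hy0 : y 0 = k2)
    (hxn : ∀ t : ℕ, (t + 1) ∉ T1 → x (t + 1) = x t)
    (hyn : ∀ t : ℕ, (t + 1) ∉ T2 → y (t + 1) = y t)
    (hxa : ∀ t : ℕ, (t + 1) ∈ T1 → x (t + 1) = (1 - r1) * k1 + r1 * y t)
    (hya : ∀ t : ℕ, (t + 1) ∈ T2 → y (t + 1) = (1 - r2) * y t + r2 * x t)
    (t11 : ℕ) (ht11mem : t11 ∈ T1) (ht11pos : 1 ≤ t11)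
    (ht11min : ∀ s ∈ T1, 1 ≤ s → t11 ≤ s) :
    (∀ t : ℕ, y (t + 1) ≤ y t) ∧ (∀ t : ℕ, t11 ≤ t → x (t + 1) ≤ x t) := by
  rw [Set.mem_Icc] at hr1 hr2
  obtain ⟨hr10, hr11⟩ := hr1
  obtain ⟨hr20, hr21⟩ := hr2
  -- invariant: k1 ≤ x t and x t ≤ y t
  have key : ∀ t : ℕ, k1 ≤ x t ∧ x t ≤ y t := by
    intro t
    induction t with
    | zero => constructor <;> simp [hx0, hy0, hk]
    | succ n ih =>
      obtain ⟨h1, h2⟩ := ih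
      have hky : k1 ≤ y n := le_trans h1 h2
      by_cases hX : (n + 1) ∈ T1 <;> by_cases hY : (n + 1) ∈ T2
      · rw [hxa n hX, hya n hY]
        constructor <;> nlinarith
      · rw [hxa n hX, hyn n hY]
        constructor <;> nlinarith
      · rw [hxn n hX, hya n hY]
        constructor <;> nlinarith
      · rw [hxn n hX, hyn n hY]; exact ⟨h1, h2⟩
  have ymono : ∀ t : ℕ, y (t + 1) ≤ y t := by
    intro t
    by_cases hY : (t + 1) ∈ T2
    · rw [hya t hY]
      nlinarith [(key t).2]
    · rw [hyn t hY]
  -- invariant for x from t11 onwards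
  have xinv : ∀ t : ℕ, t11 ≤ t → (1 - r1) * k1 + r1 * y t ≤ x t := by
    intro t ht
    induction t, ht using Nat.le_induction with
    | base =>
      obtain ⟨m, rfl⟩ : ∃ m, t11 = m + 1 := ⟨t11 - 1, (Nat.succ_pred_eq_of_pos ht11pos).symm⟩
      rw [hxa m ht11mem]
      nlinarith [ymono m]
    | succ n hn ih =>
      by_cases hX : (n + 1) ∈ T1
      · rw [hxa n hX]
        nlinarith [ymono n]
      · rw [hxn n hX]
        nlinarith [ymono n, ih]
  refine ⟨ymono, fun t ht => ?_⟩
  by_cases hX : (t + 1) ∈ T1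
  · rw [hxa t hX]
    exact xinv t ht
  · rw [hxn t hX]
end

section
/- In the two-agent fixed–floating model with arbitrary action times (agent 1 fixed, agent 2 floating), if r2 > 0 and r1 + r2 ≤ 1, then both x(t) and y(t) converge to k1 as t → ∞. -/
/-- in the two-agent fixed–floating model (agent 1 fixed, agent 2
floating) with arbitrary action times, if r2 > 0 and r1 + r2 ≤ 1, then both x
and y converge to k1. -/
theorem fixed_float_limit_k1
    (k1 k2 r1 r2 : ℝ) (hk : k1 ≤ k2)
    (hr1 : r1 ∈ Set.Icc (0:ℝ) 1) (hr2 : r2 ∈ Set.Icc (0:ℝ) 1)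
    (hr2pos : 0 < r2) (hsum : r1 + r2 ≤ 1)
    (T1 T2 : Set ℕ) (h01 : 0 ∈ T1) (h02 : 0 ∈ T2) (hU : T1 ∪ T2 = Set.univ)
    (hT1inf : T1.Infinite) (hT2inf : T2.Infinite)
    (x y : ℕ → ℝ) (hx0 : x 0 = k1) (hy0 : y 0 = k2)
    (hxn : ∀ t : ℕ, (t + 1) ∉ T1 → x (t + 1) = x t)
    (hyn : ∀ t : ℕ, (t + 1) ∉ T2 → y (t + 1) = y t)
    (hxa : ∀ t : ℕ, (t + 1) ∈ T1 → x (t + 1) = (1 - r1) * k1 + r1 * y t)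
    (hya : ∀ t : ℕ, (t + 1) ∈ T2 → y (t + 1) = (1 - r2) * y t + r2 * x t) :
    Filter.Tendsto x Filter.atTop (nhds k1) ∧
    Filter.Tendsto y Filter.atTop (nhds k1) := by
  obtain ⟨hr10, hr11⟩ := hr1
  obtain ⟨hr20, hr21⟩ := hr2
  -- invariant: k1 ≤ x t ≤ y t
  have hinv : ∀ t, k1 ≤ x t ∧ x t ≤ y t := by
    intro t
    induction t with
    | zero => exact ⟨le_of_eq hx0.symm, by rw [hx0, hy0]; exact hk⟩
    | succ t ih =>
      obtain ⟨h1, h2⟩ := ih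
      have hmem : (t+1) ∈ T1 ∪ T2 := by rw [hU]; exact Set.mem_univ _
      by_cases hA : (t+1) ∈ T1
      · rw [hxa t hA]
        by_cases hB : (t+1) ∈ T2
        · rw [hya t hB]
          constructor
          · nlinarith
          · nlinarith
        · rw [hyn t hB]
          constructor
          · nlinarith
          · nlinarith
      · have hB : (t+1) ∈ T2 := hmem.resolve_left hA
        rw [hxn t hA, hya t hB]
        exact ⟨h1, by nlinarith⟩
  -- y is antitone
  have hstep : ∀ t, y (t+1) ≤ y t := by
    intro t
    by_cases hB : (t+1) ∈ T2
    · rw [hya t hB]; nlinarith [(hinv t).2]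
    · rw [hyn t hB]
  have hanti : Antitone y := antitone_nat_of_succ_le hstep
  have hylb : ∀ t, k1 ≤ y t := fun t => le_trans (hinv t).1 (hinv t).2
  set c : ℝ := 1 - r2 * (1 - r1) with hc
  have hr1lt : r1 < 1 := by linarith
  have hc0 : 0 ≤ c := by nlinarith
  have hc1 : c < 1 := by nlinarith
  -- after agent 1 acts past time t0, x is bounded by (1-r1)k1 + r1 y t0
  have hL1 : ∀ t0 t : ℕ, (∃ s, s ∈ T1 ∧ t0 < s ∧ s ≤ t) →
      x t ≤ (1 - r1) * k1 + r1 * y t0 := by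
    intro t0 t
    induction t with
    | zero => rintro ⟨s, _, hs1, hs2⟩; omega
    | succ t ih =>
      rintro ⟨s, hsT, hs1, hs2⟩
      by_cases heq : s = t + 1
      · subst heq
        rw [hxa t hsT]
        have hyy : y t ≤ y t0 := hanti (by omega)
        nlinarith
      · have hst : s ≤ t := by omega
        by_cases hA : (t+1) ∈ T1
        · rw [hxa t hA]
          have hyy : y t ≤ y t0 := hanti (by omega)
          nlinarith
        · rw [hxn t hA]
          exact ih ⟨s, hsT, hs1, hst⟩
  -- one contraction step
  have hL2 : ∀ t0 : ℕ, ∃ t, y t ≤ k1 + c * (y t0 - k1) := by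
    intro t0
    obtain ⟨s, hsT, hs⟩ := hT1inf.exists_gt t0
    obtain ⟨t2, ht2T, ht2⟩ := hT2inf.exists_gt s
    obtain ⟨m, rfl⟩ : ∃ m, t2 = m + 1 := ⟨t2 - 1, by omega⟩
    have hx_m : x m ≤ (1 - r1) * k1 + r1 * y t0 := hL1 t0 m ⟨s, hsT, hs, by omega⟩
    have hy_m : y m ≤ y t0 := hanti (by omega)
    refine ⟨m + 1, ?_⟩
    rw [hya m ht2T, hc]
    nlinarith [mul_le_mul_of_nonneg_left hy_m (by linarith : (0:ℝ) ≤ 1 - r2),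
      mul_le_mul_of_nonneg_left hx_m hr20]
  -- iterate
  have hiter : ∀ k : ℕ, ∃ t, y t ≤ k1 + c ^ k * (k2 - k1) := by
    intro k
    induction k with
    | zero => exact ⟨0, by rw [hy0]; simp⟩
    | succ k ih =>
      obtain ⟨t, ht⟩ := ih
      obtain ⟨t', ht'⟩ := hL2 t
      refine ⟨t', ?_⟩
      have hb : y t - k1 ≤ c ^ k * (k2 - k1) := by linarith
      have := mul_le_mul_of_nonneg_left hb hc0
      calc y t' ≤ k1 + c * (y t - k1) := ht'
        _ ≤ k1 + c ^ (k + 1) * (k2 - k1) := by rw [pow_succ]; nlinarith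
  -- y tends to k1
  have hyc : Filter.Tendsto y Filter.atTop (nhds k1) := by
    rw [Metric.tendsto_atTop]
    intro ε hε
    have hpow : Filter.Tendsto (fun k : ℕ => c ^ k * (k2 - k1)) Filter.atTop (nhds 0) := by
      have h := tendsto_pow_atTop_nhds_zero_of_lt_one hc0 hc1
      simpa using h.mul_const (k2 - k1)
    obtain ⟨K, hK⟩ := Metric.tendsto_atTop.mp hpow ε hε
    have hKd := hK K le_rfl
    rw [Real.dist_eq, sub_zero] at hKd
    have hKb : c ^ K * (k2 - k1) < ε := lt_of_abs_lt hKd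
    obtain ⟨t, ht⟩ := hiter K
    refine ⟨t, fun n hn => ?_⟩
    have h1 : y n ≤ y t := hanti hn
    have h2 : k1 ≤ y n := hylb n
    rw [Real.dist_eq, abs_lt]
    constructor <;> linarith
  refine ⟨?_, hyc⟩
  exact tendsto_of_tendsto_of_tendsto_of_le_of_le
    (tendsto_const_nhds : Filter.Tendsto (fun _ : ℕ => k1) Filter.atTop (nhds k1)) hyc
    (fun t => (hinv t).1) (fun t => (hinv t).2)
end

section
/- In the two-agent fixed–floating model with arbitrary action times (agent 1 fixed, agent 2 floating): if r1 + r2 ≤ 1, then y(t) ≥ x(t) for every t ≥ 0. If r1 + r2 ≥ 1, then: y(0) ≥ x(0); for every t ≥ 1 with t ∈ T1 ∩ T2, if y(t−1) ≤ x(t−1) then y(t) ≥ x(t); for every t ∈ T1 \ T2 with t ≥ 1, y(t) ≥ x(t); and for every t ∈ T2 \ T1 with t ≥ 1, if y(t−1) ≥ x(t−1) then y(t) ≥ x(t), and if y(t−1) ≤ x(t−1) then y(t) ≤ x(t). -/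
/-- order relations between x and y in the two-agent
fixed–floating model (agent 1 fixed, agent 2 floating) with arbitrary action
times, both for r1 + r2 ≤ 1 and for r1 + r2 ≥ 1. -/
theorem fixed_float_order_structure
    (k1 k2 r1 r2 : ℝ) (hk : k1 ≤ k2)
    (hr1 : r1 ∈ Set.Icc (0:ℝ) 1) (hr2 : r2 ∈ Set.Icc (0:ℝ) 1)
    (T1 T2 : Set ℕ) (h01 : 0 ∈ T1) (h02 : 0 ∈ T2) (hU : T1 ∪ T2 = Set.univ)
    (hT1inf : T1.Infinite) (hT2inf : T2.Infinite)
    (x y : ℕ → ℝ) (hx0 : x 0 = k1) (hy0 : y 0 = k2)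
    (hxn : ∀ t : ℕ, (t + 1) ∉ T1 → x (t + 1) = x t)
    (hyn : ∀ t : ℕ, (t + 1) ∉ T2 → y (t + 1) = y t)
    (hxa : ∀ t : ℕ, (t + 1) ∈ T1 → x (t + 1) = (1 - r1) * k1 + r1 * y t)
    (hya : ∀ t : ℕ, (t + 1) ∈ T2 → y (t + 1) = (1 - r2) * y t + r2 * x t) :
    (r1 + r2 ≤ 1 → ∀ t : ℕ, y t ≥ x t) ∧
    (1 ≤ r1 + r2 →
      y 0 ≥ x 0 ∧
      (∀ t : ℕ, (t + 1) ∈ T1 ∩ T2 → y t ≤ x t → y (t + 1) ≥ x (t + 1)) ∧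
      (∀ t : ℕ, (t + 1) ∈ T1 \ T2 → y (t + 1) ≥ x (t + 1)) ∧
      (∀ t : ℕ, (t + 1) ∈ T2 \ T1 →
        (y t ≥ x t → y (t + 1) ≥ x (t + 1)) ∧
        (y t ≤ x t → y (t + 1) ≤ x (t + 1)))) := by
  obtain ⟨hr10, hr11⟩ := hr1
  obtain ⟨hr20, hr21⟩ := hr2
  -- invariant: both sequences stay ≥ k1
  have key : ∀ t : ℕ, k1 ≤ x t ∧ k1 ≤ y t := by
    intro t
    induction t with
    | zero => exact ⟨le_of_eq hx0.symm, hy0 ▸ hk⟩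
    | succ t ih =>
      obtain ⟨hx, hy⟩ := ih
      constructor
      · by_cases h : (t + 1) ∈ T1
        · rw [hxa t h]; nlinarith
        · rw [hxn t h]; exact hx
      · by_cases h : (t + 1) ∈ T2
        · rw [hya t h]; nlinarith
        · rw [hyn t h]; exact hy
  constructor
  · intro hs t
    induction t with
    | zero => rw [hx0, hy0]; exact hk
    | succ t ih =>
      obtain ⟨hxk, hyk⟩ := key t
      by_cases h1 : (t + 1) ∈ T1 <;> by_cases h2 : (t + 1) ∈ T2
      · rw [hxa t h1, hya t h2]; nlinarith
      · rw [hxa t h1, hyn t h2]; nlinarith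
      · rw [hxn t h1, hya t h2]; nlinarith
      · rw [hxn t h1, hyn t h2]; exact ih
  · intro hs
    refine ⟨by rw [hx0, hy0]; exact hk, ?_, ?_, ?_⟩
    · intro t ⟨h1, h2⟩ hle
      obtain ⟨hxk, hyk⟩ := key t
      rw [hxa t h1, hya t h2]; nlinarith
    · intro t ⟨h1, h2⟩
      obtain ⟨hxk, hyk⟩ := key t
      rw [hxa t h1, hyn t h2]; nlinarith
    · intro t ⟨h2, h1⟩
      obtain ⟨hxk, hyk⟩ := key t
      constructor <;> intro h <;> rw [hxn t h1, hya t h2] <;> nlinarith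
end

section
/- In the two-agent floating–fixed model with arbitrary action times (agent 1 floating, agent 2 fixed), if r1 > 0 and r1 + r2 ≤ 1, then both x(t) and y(t) converge to k2 as t → ∞. -/
/-- in the two-agent floating–fixed model (agent 1 floating,
agent 2 fixed) with arbitrary action times, if r1 > 0 and r1 + r2 ≤ 1, then
both x and y converge to k2. -/
theorem float_fixed_limit_k2
    (k1 k2 r1 r2 : ℝ) (hk : k1 ≤ k2)
    (hr1 : r1 ∈ Set.Icc (0:ℝ) 1) (hr2 : r2 ∈ Set.Icc (0:ℝ) 1)
    (hr1pos : 0 < r1) (hsum : r1 + r2 ≤ 1)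
    (T1 T2 : Set ℕ) (h01 : 0 ∈ T1) (h02 : 0 ∈ T2) (hU : T1 ∪ T2 = Set.univ)
    (hT1inf : T1.Infinite) (hT2inf : T2.Infinite)
    (x y : ℕ → ℝ) (hx0 : x 0 = k1) (hy0 : y 0 = k2)
    (hxn : ∀ t : ℕ, (t + 1) ∉ T1 → x (t + 1) = x t)
    (hyn : ∀ t : ℕ, (t + 1) ∉ T2 → y (t + 1) = y t)
    (hxa : ∀ t : ℕ, (t + 1) ∈ T1 → x (t + 1) = (1 - r1) * x t + r1 * y t)
    (hya : ∀ t : ℕ, (t + 1) ∈ T2 → y (t + 1) = (1 - r2) * k2 + r2 * x t) :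
    Filter.Tendsto x Filter.atTop (nhds k2) ∧
    Filter.Tendsto y Filter.atTop (nhds k2) := by
  obtain ⟨hr10, hr11⟩ := hr1
  obtain ⟨hr20, hr21⟩ := hr2
  set d : ℕ → ℝ := fun t => k2 - x t with hd
  set e : ℕ → ℝ := fun t => k2 - y t with he
  clear_value d e
  have hd1 : ∀ t, (t+1) ∈ T1 → d (t+1) = (1-r1) * d t + r1 * e t := by
    intro t ht; simp only [hd, he]; rw [hxa t ht]; ring
  have hd1' : ∀ t, (t+1) ∉ T1 → d (t+1) = d t := by
    intro t ht; simp only [hd]; rw [hxn t ht]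
  have he2 : ∀ t, (t+1) ∈ T2 → e (t+1) = r2 * d t := by
    intro t ht; simp only [hd, he]; rw [hya t ht]; ring
  have he2' : ∀ t, (t+1) ∉ T2 → e (t+1) = e t := by
    intro t ht; simp only [he]; rw [hyn t ht]
  -- invariant: 0 ≤ e t ≤ d t
  have inv : ∀ t, 0 ≤ e t ∧ e t ≤ d t := by
    intro t
    induction t with
    | zero =>
      constructor
      · simp [he, hy0]
      · simp only [he, hd, hy0, hx0]; linarith
    | succ t ih =>
      obtain ⟨ih1, ih2⟩ := ih
      have hd0 : 0 ≤ d t := le_trans ih1 ih2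
      by_cases h1 : (t+1) ∈ T1 <;> by_cases h2 : (t+1) ∈ T2
      · rw [hd1 t h1, he2 t h2]
        constructor
        · exact mul_nonneg hr20 hd0
        · nlinarith [mul_nonneg (by linarith : (0:ℝ) ≤ 1 - r1 - r2) hd0,
            mul_nonneg hr1pos.le ih1]
      · rw [hd1 t h1, he2' t h2]
        constructor
        · exact ih1
        · nlinarith [mul_nonneg (by linarith : (0:ℝ) ≤ 1 - r1) (by linarith : 0 ≤ d t - e t)]
      · rw [hd1' t h1, he2 t h2]
        constructor
        · exact mul_nonneg hr20 hd0
        · nlinarith [mul_nonneg (by linarith : (0:ℝ) ≤ 1 - r2) hd0]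
      · rw [hd1' t h1, he2' t h2]; exact ⟨ih1, ih2⟩
  have dnn : ∀ t, 0 ≤ d t := fun t => le_trans (inv t).1 (inv t).2
  -- d is antitone
  have hmono : ∀ t, d (t+1) ≤ d t := by
    intro t
    by_cases h1 : (t+1) ∈ T1
    · rw [hd1 t h1]
      nlinarith [mul_nonneg hr1pos.le (by linarith [(inv t).2] : 0 ≤ d t - e t)]
    · rw [hd1' t h1]
  have hanti : Antitone d := antitone_nat_of_succ_le hmono
  have hbdd : BddBelow (Set.range d) := ⟨0, by rintro _ ⟨t, rfl⟩; exact dnn t⟩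
  set L : ℝ := ⨅ t, d t with hLdef
  clear_value L
  have hL : Filter.Tendsto d Filter.atTop (nhds L) := by rw [hLdef]; exact tendsto_atTop_ciInf hanti hbdd
  have hL0 : 0 ≤ L := by rw [hLdef]; exact le_ciInf dnn
  have hLle : ∀ t, L ≤ d t := fun t => by rw [hLdef]; exact ciInf_le hbdd t
  -- bound on e after a T2 update
  have claimB : ∀ s ∈ T2, ∀ t, s ≤ t → e t ≤ r2 * d (s - 1) := by
    intro s hs t hst
    obtain ⟨n, rfl⟩ := Nat.exists_eq_add_of_le hst
    induction n with
    | zero =>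
      match s, hs with
      | 0, hs => simpa [he, hy0] using mul_nonneg hr20 (dnn 0)
      | (u+1), hs => simpa using (he2 u hs).le
    | succ n ihn =>
      have ihn' := ihn (Nat.le_add_right s n)
      rw [show s + (n+1) = (s + n) + 1 from rfl]
      by_cases h2 : (s + n + 1) ∈ T2
      · rw [he2 _ h2]
        exact mul_le_mul_of_nonneg_left (hanti (by omega)) hr20
      · rw [he2' _ h2]; exact ihn'
  -- key: for every ε > 0, eventually e t ≤ r2 * (L + ε)
  have key : ∀ ε : ℝ, 0 < ε → ∃ N, ∀ t ≥ N, e t ≤ r2 * (L + ε) ∧ d t ≤ L + ε := by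
    intro ε hε
    obtain ⟨N, hN⟩ := (Metric.tendsto_atTop.1 hL) ε hε
    have hdN : ∀ t ≥ N, d t ≤ L + ε := by
      intro t ht
      have := hN t ht
      rw [Real.dist_eq, abs_lt] at this
      linarith [this.2]
    obtain ⟨s, hsT2, hsN⟩ := hT2inf.exists_gt N
    refine ⟨s, fun t ht => ⟨?_, hdN t (by omega)⟩⟩
    calc e t ≤ r2 * d (s - 1) := claimB s hsT2 t ht
      _ ≤ r2 * (L + ε) := mul_le_mul_of_nonneg_left (hdN (s-1) (by omega)) hr20
  -- L = 0
  have hLzero : L = 0 := by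
    have h1 : ∀ ε : ℝ, 0 < ε → r1 * (1 - r2) * L ≤ 0 + ε := by
      intro ε hε
      obtain ⟨N, hN⟩ := key ε hε
      obtain ⟨u, huT1, huN⟩ := hT1inf.exists_gt N
      obtain ⟨t, rfl⟩ : ∃ t, u = t + 1 := ⟨u - 1, by omega⟩
      have htN : N ≤ t := by omega
      obtain ⟨het, hdt⟩ := hN t htN
      have hstep : L ≤ (1-r1) * d t + r1 * e t := by
        rw [← hd1 t huT1]; exact hLle _
      have hq1 : (1-r1) * d t ≤ (1-r1) * (L + ε) :=
        mul_le_mul_of_nonneg_left hdt (by linarith)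
      have hq2 : r1 * e t ≤ r1 * (r2 * (L + ε)) :=
        mul_le_mul_of_nonneg_left het hr10
      have hQ : L ≤ (1-r1) * (L + ε) + r1 * (r2 * (L + ε)) := by linarith
      nlinarith [mul_nonneg (mul_nonneg hr10 (by linarith : (0:ℝ) ≤ 1 - r2)) hε.le]
    have h2 : r1 * (1 - r2) * L ≤ 0 := le_of_forall_pos_le_add h1
    have h3 : 0 < r1 * (1 - r2) := mul_pos hr1pos (by linarith)
    have : L ≤ 0 := by
      by_contra h
      push_neg at h
      nlinarith
    linarith
  -- conclude for x
  have hdzero : Filter.Tendsto d Filter.atTop (nhds 0) := hLzero ▸ hL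
  have hx : Filter.Tendsto x Filter.atTop (nhds k2) := by
    have h := (tendsto_const_nhds :
      Filter.Tendsto (fun _ : ℕ => k2) Filter.atTop (nhds k2)).sub hdzero
    simp only [hd, sub_zero] at h
    simpa [sub_sub_cancel] using h
  refine ⟨hx, ?_⟩
  -- e → 0
  have hezero : Filter.Tendsto e Filter.atTop (nhds 0) := by
    rw [Metric.tendsto_atTop]
    intro ε hε
    obtain ⟨N, hN⟩ := key (ε/2) (by linarith)
    refine ⟨N, fun t ht => ?_⟩
    have h1 := (hN t ht).1
    rw [hLzero] at h1
    have h2 := (inv t).1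
    rw [Real.dist_eq, abs_sub_comm, abs_of_nonpos (by linarith)]
    have h3 : r2 * (0 + ε/2) ≤ ε/2 := by nlinarith
    linarith
  have h := (tendsto_const_nhds :
    Filter.Tendsto (fun _ : ℕ => k2) Filter.atTop (nhds k2)).sub hezero
  simp only [he, sub_zero] at h
  simpa [sub_sub_cancel] using h
end

section
/- In the two-agent floating–fixed model with arbitrary action times (agent 1 floating, agent 2 fixed), if r1 > 0 and r1 + r2 ≤ 1, then y(t+1) ≥ y(t) for every t ≥ t_{2,1}, where t_{2,1} denotes the smallest positive element of T2, and x(t+1) ≥ x(t) for every t ≥ 0. -/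
/-- in the two-agent floating–fixed model (agent 1 floating,
agent 2 fixed) with arbitrary action times, if r1 > 0 and r1 + r2 ≤ 1, then x
is non-decreasing everywhere and y is non-decreasing from t₂₁, the smallest
positive element of T2, onwards. -/
theorem float_fixed_monotone
    (k1 k2 r1 r2 : ℝ) (hk : k1 ≤ k2)
    (hr1 : r1 ∈ Set.Icc (0:ℝ) 1) (hr2 : r2 ∈ Set.Icc (0:ℝ) 1)
    (hr1pos : 0 < r1) (hsum : r1 + r2 ≤ 1)
    (T1 T2 : Set ℕ) (h01 : 0 ∈ T1) (h02 : 0 ∈ T2) (hU : T1 ∪ T2 = Set.univ)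
    (hT1inf : T1.Infinite) (hT2inf : T2.Infinite)
    (x y : ℕ → ℝ) (hx0 : x 0 = k1) (hy0 : y 0 = k2)
    (hxn : ∀ t : ℕ, (t + 1) ∉ T1 → x (t + 1) = x t)
    (hyn : ∀ t : ℕ, (t + 1) ∉ T2 → y (t + 1) = y t)
    (hxa : ∀ t : ℕ, (t + 1) ∈ T1 → x (t + 1) = (1 - r1) * x t + r1 * y t)
    (hya : ∀ t : ℕ, (t + 1) ∈ T2 → y (t + 1) = (1 - r2) * k2 + r2 * x t)
    (t21 : ℕ) (ht21mem : t21 ∈ T2) (ht21pos : 1 ≤ t21)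
    (ht21min : ∀ s ∈ T2, 1 ≤ s → t21 ≤ s) :
    (∀ t : ℕ, t21 ≤ t → y (t + 1) ≥ y t) ∧ (∀ t : ℕ, x (t + 1) ≥ x t) := by
  obtain ⟨hr1a, hr1b⟩ := hr1
  obtain ⟨hr2a, hr2b⟩ := hr2
  -- invariant: x t ≤ y t, x t ≤ k2, y t ≤ k2
  have inv : ∀ t : ℕ, x t ≤ y t ∧ x t ≤ k2 ∧ y t ≤ k2 := by
    intro t
    induction t with
    | zero => simp [hx0, hy0, hk]
    | succ n ih =>
      obtain ⟨h1, h2, h3⟩ := ih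
      have hmem : (n + 1) ∈ T1 ∪ T2 := by rw [hU]; trivial
      by_cases hA : (n + 1) ∈ T1 <;> by_cases hB : (n + 1) ∈ T2
      · rw [hxa n hA, hya n hB]
        refine ⟨?_, ?_, ?_⟩ <;> nlinarith [mul_nonneg hr1a (sub_nonneg.2 h3),
          mul_nonneg (sub_nonneg.2 hsum) (sub_nonneg.2 h2),
          mul_nonneg hr2a (sub_nonneg.2 h2)]
      · rw [hxa n hA, hyn n hB]
        refine ⟨?_, ?_, ?_⟩ <;> nlinarith [mul_nonneg (sub_nonneg.2 hr1b) (sub_nonneg.2 h1),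
          mul_nonneg hr1a (sub_nonneg.2 h3), mul_nonneg (sub_nonneg.2 hr1b) (sub_nonneg.2 h2)]
      · rw [hxn n hA, hya n hB]
        refine ⟨?_, ?_, ?_⟩ <;> nlinarith [mul_nonneg (sub_nonneg.2 hr2b) (sub_nonneg.2 h2),
          mul_nonneg hr2a (sub_nonneg.2 h2)]
      · exact absurd hmem (by simp [hA, hB])
  have hxstep : ∀ t : ℕ, x t ≤ x (t + 1) := by
    intro t
    by_cases hA : (t + 1) ∈ T1
    · rw [hxa t hA]
      have := (inv t).1
      nlinarith [mul_nonneg hr1a (sub_nonneg.2 this)]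
    · rw [hxn t hA]
  have hxmono : Monotone x := monotone_nat_of_le_succ hxstep
  refine ⟨?_, hxstep⟩
  -- representation of y for t ≥ t21
  have yrep : ∀ t : ℕ, t21 ≤ t → ∃ s : ℕ, 1 ≤ s ∧ s ≤ t ∧
      y t = (1 - r2) * k2 + r2 * x (s - 1) := by
    intro t ht
    induction t, ht using Nat.le_induction with
    | base =>
      obtain ⟨m, rfl⟩ := Nat.exists_eq_add_of_le ht21pos
      refine ⟨1 + m, by omega, le_refl _, ?_⟩
      have h' : 1 + m = m + 1 := by omega
      rw [h', hya m (h' ▸ ht21mem)]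
      simp
    | succ n hn ih =>
      obtain ⟨s, hs1, hs2, hs3⟩ := ih
      by_cases hB : (n + 1) ∈ T2
      · exact ⟨n + 1, by omega, le_refl _, by rw [hya n hB]; simp⟩
      · exact ⟨s, hs1, by omega, by rw [hyn n hB]; exact hs3⟩
  intro t ht
  obtain ⟨s, hs1, hs2, hs3⟩ := yrep t ht
  by_cases hB : (t + 1) ∈ T2
  · rw [hya t hB, hs3]
    have : x (s - 1) ≤ x t := hxmono (by omega)
    nlinarith [mul_nonneg hr2a (sub_nonneg.2 this)]
  · rw [hyn t hB]
end

section
/- In the alternating two-agent floating–floating model, where agent 1 acts exactly at the even times and agent 2 acts exactly at time 0 and at the odd times, if 0 < r1 + r2 < 2, then x(t) and y(t) both converge as t → ∞ to the common limit (r2·k1 + (r1 − r1·r2)·k2)/(r1 + r2 − r1·r2), which equals (1/2)·(k1 + k2 + (k2 − k1)·(r1 − r2 − r1·r2)/(r1 + r2 − r1·r2)). -/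
/-!
Over one round of moves the gap `y t - x t` shrinks by the factor `q = (1 - r1) * (1 - r2)`.
Summing the geometric series, agent 1 moves by `r1 * (1 - r2) * c` in total and agent 2 by
`r2 * c`, where `c = (k2 - k1) / (r1 + r2 - r1 * r2)`; this locates the common limit `L`, from
which `x t` and `y t` differ by multiples of `q ^ ⌊t / 2⌋` and `q ^ ⌊(t + 1) / 2⌋`.
For `r1, r2 ∈ [0, 1]`, not both zero, `0 ≤ q < 1`.
-/

open Filter Topology

section AlternatingFloating

variable {r1 r2 : ℝ} {x y : ℕ → ℝ}

theorem alternating_closed_form (L c : ℝ)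
    (hx0 : x 0 = L - r1 * (1 - r2) * c) (hy0 : y 0 = L + r2 * c)
    (heven : ∀ t : ℕ, Even (t + 1) →
      x (t + 1) = (1 - r1) * x t + r1 * y t ∧ y (t + 1) = y t)
    (hodd : ∀ t : ℕ, Odd (t + 1) →
      y (t + 1) = (1 - r2) * y t + r2 * x t ∧ x (t + 1) = x t) (t : ℕ) :
    x t = L - r1 * (1 - r2) * c * ((1 - r1) * (1 - r2)) ^ (t / 2) ∧
      y t = L + r2 * c * ((1 - r1) * (1 - r2)) ^ ((t + 1) / 2) := by
  induction t with
  | zero => simpa using ⟨hx0, hy0⟩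
  | succ t ih =>
    obtain ⟨ihx, ihy⟩ := ih
    rcases Nat.even_or_odd t with ⟨n, rfl⟩ | ⟨n, rfl⟩
    · obtain ⟨hy, hx⟩ := hodd (n + n) ⟨n, by ring⟩
      rw [show (n + n) / 2 = n by omega, show (n + n + 1) / 2 = n by omega] at *
      rw [show (n + n + 1 + 1) / 2 = n + 1 by omega, hx, hy, ihx, ihy, pow_succ]
      constructor <;> ring
    · obtain ⟨hx, hy⟩ := heven (2 * n + 1) ⟨n + 1, by ring⟩
      rw [show (2 * n + 1) / 2 = n by omega, show (2 * n + 1 + 1) / 2 = n + 1 by omega] at *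
      rw [show (2 * n + 1 + 1 + 1) / 2 = n + 1 by omega, hx, hy, ihx, ihy, pow_succ]
      constructor <;> ring

theorem tendsto_of_alternating_closed_form {L c : ℝ}
    (hq : |(1 - r1) * (1 - r2)| < 1)
    (hxy : ∀ t, x t = L - r1 * (1 - r2) * c * ((1 - r1) * (1 - r2)) ^ (t / 2) ∧
      y t = L + r2 * c * ((1 - r1) * (1 - r2)) ^ ((t + 1) / 2)) :
    Tendsto x atTop (𝓝 L) ∧ Tendsto y atTop (𝓝 L) := by
  have hpow := tendsto_pow_atTop_nhds_zero_of_abs_lt_one hq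
  have hhalf : Tendsto (· / 2) atTop atTop := Nat.tendsto_div_const_atTop two_ne_zero
  have hx := tendsto_const_nhds (x := L) |>.sub ((hpow.comp hhalf).const_mul (r1 * (1 - r2) * c))
  have hy := tendsto_const_nhds (x := L) |>.add
    ((hpow.comp (hhalf.comp (tendsto_add_atTop_nat 1))).const_mul (r2 * c))
  simp only [mul_zero, sub_zero, add_zero] at hx hy
  exact ⟨hx.congr fun t => (hxy t).1.symm, hy.congr fun t => (hxy t).2.symm⟩

end AlternatingFloating

theorem abs_one_sub_mul_one_sub_lt_one {r1 r2 : ℝ}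
    (hr1 : r1 ∈ Set.Icc (0 : ℝ) 1) (hr2 : r2 ∈ Set.Icc (0 : ℝ) 1) (hsum : 0 < r1 + r2) :
    |(1 - r1) * (1 - r2)| < 1 := by
  obtain ⟨hr1₀, hr1₁⟩ := hr1
  obtain ⟨hr2₀, hr2₁⟩ := hr2
  rw [abs_of_nonneg (mul_nonneg (by linarith) (by linarith))]
  nlinarith

theorem float_float_alternating_limit_general
    (k1 k2 r1 r2 : ℝ)
    (hr1 : r1 ∈ Set.Icc (0:ℝ) 1) (hr2 : r2 ∈ Set.Icc (0:ℝ) 1)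
    (hsum0 : 0 < r1 + r2)
    (x y : ℕ → ℝ) (hx0 : x 0 = k1) (hy0 : y 0 = k2)
    (heven : ∀ t : ℕ, Even (t + 1) →
      x (t + 1) = (1 - r1) * x t + r1 * y t ∧ y (t + 1) = y t)
    (hodd : ∀ t : ℕ, Odd (t + 1) →
      y (t + 1) = (1 - r2) * y t + r2 * x t ∧ x (t + 1) = x t) :
    Filter.Tendsto x Filter.atTop
      (nhds ((r2 * k1 + (r1 - r1 * r2) * k2) / (r1 + r2 - r1 * r2))) ∧
    Filter.Tendsto y Filter.atTop
      (nhds ((r2 * k1 + (r1 - r1 * r2) * k2) / (r1 + r2 - r1 * r2))) ∧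
    (r2 * k1 + (r1 - r1 * r2) * k2) / (r1 + r2 - r1 * r2) =
      (1 / 2) * (k1 + k2 + (k2 - k1) * (r1 - r2 - r1 * r2) / (r1 + r2 - r1 * r2)) := by
  have hq := abs_one_sub_mul_one_sub_lt_one hr1 hr2 hsum0
  have hs : r1 + r2 - r1 * r2 ≠ 0 := by
    have := (abs_lt.mp hq).2
    intro h
    linarith
  obtain ⟨hx, hy⟩ := tendsto_of_alternating_closed_form hq <|
    alternating_closed_form ((r2 * k1 + (r1 - r1 * r2) * k2) / (r1 + r2 - r1 * r2))
      ((k2 - k1) / (r1 + r2 - r1 * r2)) (by rw [hx0]; linear_combination (-k1) * mul_inv_cancel₀ hs)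
      (by rw [hy0]; linear_combination (-k2) * mul_inv_cancel₀ hs) heven hodd
  exact ⟨hx, hy, by linear_combination ((k1 + k2) / 2) * mul_inv_cancel₀ hs⟩

/-- in the alternating two-agent floating–floating model (agent 1
acts exactly at even times, agent 2 at time 0 and at odd times), with
0 < r1 + r2 < 2, both sequences converge to the stated common limit. -/
theorem float_float_alternating_limit
    (k1 k2 r1 r2 : ℝ) (hk : k1 ≤ k2)
    (hr1 : r1 ∈ Set.Icc (0:ℝ) 1) (hr2 : r2 ∈ Set.Icc (0:ℝ) 1)
    (hsum0 : 0 < r1 + r2) (hsum2 : r1 + r2 < 2)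
    (x y : ℕ → ℝ) (hx0 : x 0 = k1) (hy0 : y 0 = k2)
    (heven : ∀ t : ℕ, Even (t + 1) →
      x (t + 1) = (1 - r1) * x t + r1 * y t ∧ y (t + 1) = y t)
    (hodd : ∀ t : ℕ, Odd (t + 1) →
      y (t + 1) = (1 - r2) * y t + r2 * x t ∧ x (t + 1) = x t) :
    Filter.Tendsto x Filter.atTop
      (nhds ((r2 * k1 + (r1 - r1 * r2) * k2) / (r1 + r2 - r1 * r2))) ∧
    Filter.Tendsto y Filter.atTop
      (nhds ((r2 * k1 + (r1 - r1 * r2) * k2) / (r1 + r2 - r1 * r2))) ∧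
    (r2 * k1 + (r1 - r1 * r2) * k2) / (r1 + r2 - r1 * r2) =
      (1 / 2) * (k1 + k2 + (k2 - k1) * (r1 - r2 - r1 * r2) / (r1 + r2 - r1 * r2)) :=
  float_float_alternating_limit_general k1 k2 r1 r2 hr1 hr2 hsum0 x y hx0 hy0 heven hodd
end

section
/- In the synchronous multi-agent all-floating model on a finite connected simple graph G, suppose r_i' > 0 and r_i + r_i' ≤ 1 for every agent i, and suppose that G contains a cycle of odd length (i.e., G is not bipartite) or there exists an agent i with r_i + r_i' < 1. Then for every ordered pair (i,j) with {i,j} an edge of G, the sequence x_{i,j}(t) converges as t → ∞, all these limits are equal, and the common limit is L = (Σ_{i∈N} (d(i)/(r_i + r_i'))·k_i) / (Σ_{i∈N} d(i)/(r_i + r_i')), a convex combination of the kindness values. -/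
/-!
In the all-floating model the new value on a dart `(i, j)` is a convex combination of old
values in which the dart itself (weight `1 - rᵢ - rᵢ'`) and every dart `(l, i)` (weight at
least `rᵢ' / d(i)`) have weight bounded below by some `ε > 0`. Following these dependences,
any dart reaches any other in exactly `N` steps, using walks of one common length (these exist
thanks to the odd cycle) or by idling at an agent with `rᵢ + rᵢ' < 1`. Hence every `N` steps
the gap between the largest and the smallest value shrinks by the factor `1 - 2εᴺ`, so all
values converge to a common limit, which is pinned down by the conserved quantity
`∑_{(i,j)} x_{i,j}(t) / (rᵢ + rᵢ')`.
-/

open Finset Filter Topology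

inductive ReachIn {α : Type*} (R : α → α → Prop) : ℕ → α → α → Prop
  | refl (a : α) : ReachIn R 0 a a
  | head {n : ℕ} {a b c : α} : R a b → ReachIn R n b c → ReachIn R (n + 1) a c

theorem ReachIn.trans {α : Type*} {R : α → α → Prop} {m n : ℕ} {a b c : α}
    (hab : ReachIn R m a b) (hbc : ReachIn R n b c) : ReachIn R (m + n) a c := by
  induction hab with
  | refl => simpa using hbc
  | head hab _ ih => rw [Nat.add_right_comm]; exact .head hab (ih hbc)

theorem exists_tendsto_of_gap_le_mul {u l : ℕ → ℝ} (hu : Antitone u) (hl : Monotone l)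
    (hlu : ∀ t, l t ≤ u t) {q : ℝ} (hq : q < 1) {N : ℕ}
    (hgap : ∀ t, u (t + N) - l (t + N) ≤ q * (u t - l t)) :
    ∃ L, Tendsto u atTop (𝓝 L) ∧ Tendsto l atTop (𝓝 L) := by
  have hu_lim := tendsto_atTop_ciInf hu ⟨l 0, by
    rintro _ ⟨t, rfl⟩; exact (hl (Nat.zero_le t)).trans (hlu t)⟩
  have hl_lim := tendsto_atTop_ciSup hl ⟨u 0, by
    rintro _ ⟨t, rfl⟩; exact (hlu t).trans (hu (Nat.zero_le t))⟩
  set g := (⨅ t, u t) - ⨆ t, l t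
  have hg_lim : Tendsto (fun t ↦ u t - l t) atTop (𝓝 g) := hu_lim.sub hl_lim
  have hg_nonneg : 0 ≤ g := ge_of_tendsto' hg_lim fun t ↦ sub_nonneg.2 (hlu t)
  have hg_le : g ≤ q * g :=
    le_of_tendsto_of_tendsto' ((tendsto_add_atTop_iff_nat N).2 hg_lim) (hg_lim.const_mul q) hgap
  have hg : g = 0 := by nlinarith
  refine ⟨⨆ t, l t, ?_, hl_lim⟩
  rwa [← sub_eq_zero.1 hg]

section Mixing

variable {α : Type*} {R : α → α → Prop} {ε : ℝ} {y : ℕ → α → ℝ}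

/-- One half of "`y (t + 1) a` is a convex combination of the values `y t` giving weight at
least `ε` to `y t b` whenever `R a b`"; the other half is `IsMixing R ε (-y)`. -/
def IsMixing (R : α → α → Prop) (ε : ℝ) (y : ℕ → α → ℝ) : Prop :=
  ∀ t a b, R a b → ∀ M, (∀ c, y t c ≤ M) → ε * (M - y t b) ≤ M - y (t + 1) a

theorem IsMixing.le_of_forall_le (hy : IsMixing R ε y) (hε : 0 ≤ ε) (hR : ∀ a, ∃ b, R a b)
    {t : ℕ} {M : ℝ} (hM : ∀ c, y t c ≤ M) (s : ℕ) (c : α) : y (t + s) c ≤ M := by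
  induction s generalizing c with
  | zero => exact hM c
  | succ s ih =>
    obtain ⟨b, hb⟩ := hR c
    have := hy (t + s) c b hb M ih
    rw [← add_assoc]
    linarith [mul_nonneg hε (sub_nonneg.2 (ih b))]

theorem IsMixing.pow_mul_sub_le (hy : IsMixing R ε y) (hε : 0 ≤ ε) (hR : ∀ a, ∃ b, R a b)
    {t n : ℕ} {M : ℝ} (hM : ∀ c, y t c ≤ M) {a b : α} (hab : ReachIn R n a b) :
    ε ^ n * (M - y t b) ≤ M - y (t + n) a := by
  induction hab with
  | refl => simp
  | @head n a c b hac _ ih =>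
    calc ε ^ (n + 1) * (M - y t b) = ε * (ε ^ n * (M - y t b)) := by ring
      _ ≤ ε * (M - y (t + n) c) := mul_le_mul_of_nonneg_left ih hε
      _ ≤ M - y (t + (n + 1)) a := hy (t + n) a c hac M (hy.le_of_forall_le hε hR hM n)

theorem IsMixing.exists_tendsto [Finite α] [Nonempty α] (hup : IsMixing R ε y)
    (hlo : IsMixing R ε (-y)) (hε : 0 < ε) (hR : ∀ a, ∃ b, R a b) {N : ℕ}
    (hN : ∀ a b, ReachIn R N a b) : ∃ L, ∀ a, Tendsto (fun t ↦ y t a) atTop (𝓝 L) := by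
  set u := fun t ↦ ⨆ a, y t a
  set l := fun t ↦ ⨅ a, y t a
  have hyu : ∀ t a, y t a ≤ u t := fun t ↦ le_ciSup (Finite.bddAbove_range _)
  have hly : ∀ t a, l t ≤ y t a := fun t ↦ ciInf_le (Finite.bddBelow_range _)
  have hly' : ∀ t a, (-y) t a ≤ -l t := fun t a ↦ neg_le_neg (hly t a)
  have hu : Antitone u := antitone_nat_of_succ_le fun t ↦
    ciSup_le (hup.le_of_forall_le hε.le hR (hyu t) 1)
  have hl : Monotone l := monotone_nat_of_le_succ fun t ↦
    le_ciInf fun a ↦ neg_le_neg_iff.1 (hlo.le_of_forall_le hε.le hR (hly' t) 1 a)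
  have hgap : ∀ t, u (t + N) - l (t + N) ≤ (1 - 2 * ε ^ N) * (u t - l t) := by
    intro t
    obtain ⟨b, hb⟩ := exists_eq_ciInf_of_finite (f := y t)
    obtain ⟨b', hb'⟩ := exists_eq_ciSup_of_finite (f := y t)
    have hu_le : u (t + N) ≤ u t - ε ^ N * (u t - l t) := ciSup_le fun a ↦ by
      have := hup.pow_mul_sub_le hε.le hR (hyu t) (hN a b)
      rw [hb] at this
      linarith
    have hl_ge : l t + ε ^ N * (u t - l t) ≤ l (t + N) := le_ciInf fun a ↦ by
      have := hlo.pow_mul_sub_le hε.le hR (hly' t) (hN a b')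
      simp only [Pi.neg_apply, hb'] at this
      linarith
    linarith
  obtain ⟨L, huL, hlL⟩ := exists_tendsto_of_gap_le_mul hu hl
    (fun t ↦ (hly t (Classical.arbitrary α)).trans (hyu t _)) (by linarith [pow_pos hε N]) hgap
  exact ⟨L, fun a ↦ tendsto_of_tendsto_of_tendsto_of_le_of_le hlL huL (hly · a) (hyu · a)⟩

end Mixing

namespace SimpleGraph

variable {V : Type*} {G : SimpleGraph V}

theorem Walk.exists_length_eq_add_two_mul {u v w : V} (h : G.Adj v w) (p : G.Walk u v) (k : ℕ) :
    ∃ q : G.Walk u v, q.length = p.length + 2 * k := by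
  induction k with
  | zero => exact ⟨p, rfl⟩
  | succ k ih =>
    obtain ⟨q, hq⟩ := ih
    exact ⟨q.append (.cons h (.cons h.symm .nil)), by
      simp only [Walk.length_append, Walk.length_cons, Walk.length_nil, hq]; ring⟩

theorem Preconnected.exists_walk_length_eq_of_odd [Fintype V] (hG : G.Preconnected) {u : V}
    (c : G.Walk u u) (hc : Odd c.length) (v w : V) :
    ∃ p : G.Walk v w, p.length = 2 * Fintype.card V + c.length := by
  classical
  obtain ⟨x, hux⟩ : ∃ x, G.Adj u x := by
    cases c with
    | nil => simp at hc
    | cons h _ => exact ⟨_, h⟩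
  let p₁ := (hG v u).some.toPath
  let p₂ := (hG u w).some.toPath
  have h₁ : p₁.1.length < Fintype.card V := p₁.2.length_lt
  have h₂ : p₂.1.length < Fintype.card V := p₂.2.length_lt
  have hpad : ∀ (p : G.Walk v u) (k : ℕ),
      p.length + 2 * k + p₂.1.length = 2 * Fintype.card V + c.length →
      ∃ q : G.Walk v w, q.length = 2 * Fintype.card V + c.length := fun p k hk ↦ by
    obtain ⟨q, hq⟩ := p.exists_length_eq_add_two_mul hux k
    exact ⟨q.append p₂, by simp [hq, hk]⟩
  obtain ⟨m, hm⟩ := hc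
  rcases Nat.even_or_odd (p₁.1.length + p₂.1.length) with ⟨k, hk⟩ | ⟨k, hk⟩
  · exact hpad (p₁.1.append c) (Fintype.card V - k)
      (by simp only [Walk.length_append]; omega)
  · exact hpad p₁ (Fintype.card V + m - k) (by omega)

def Dart.DependsOn (lazy : V → Prop) (d d' : G.Dart) : Prop :=
  d'.snd = d.fst ∨ lazy d.fst ∧ d' = d

variable {lazy : V → Prop}

theorem reachIn_dependsOn_of_walk {u v : V} (p : G.Walk u v) {d d' : G.Dart}
    (hd : d.fst = u) (hd' : d'.snd = v) : ReachIn (Dart.DependsOn lazy) (p.length + 1) d d' := by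
  induction p generalizing d with
  | nil => exact .head (.inl (hd'.trans hd.symm)) (.refl d')
  | cons h _ ih => exact .head (.inl hd.symm) (ih (d := ⟨(_, _), h.symm⟩) rfl hd')

theorem reachIn_dependsOn_self {d : G.Dart} (hd : lazy d.fst) (n : ℕ) :
    ReachIn (Dart.DependsOn lazy) n d d := by
  induction n with
  | zero => exact .refl d
  | succ n ih => exact .head (.inr ⟨hd, rfl⟩) ih

theorem Preconnected.exists_reachIn_dependsOn [Fintype V] [Nontrivial V] (hG : G.Preconnected)
    (h : (∃ (u : V) (c : G.Walk u u), Odd c.length) ∨ ∃ v, lazy v) :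
    ∃ N, ∀ d d' : G.Dart, ReachIn (Dart.DependsOn lazy) N d d' := by
  classical
  rcases h with ⟨u, c, hc⟩ | ⟨v, hv⟩
  · refine ⟨2 * Fintype.card V + c.length + 1, fun d d' ↦ ?_⟩
    obtain ⟨p, hp⟩ := hG.exists_walk_length_eq_of_odd c hc d.fst d'.snd
    exact hp ▸ reachIn_dependsOn_of_walk p rfl rfl
  · refine ⟨2 * Fintype.card V, fun d d' ↦ ?_⟩
    obtain ⟨w, hvw⟩ := (G.degree_pos_iff_exists_adj v).1 (hG.degree_pos_of_nontrivial v)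
    let g : G.Dart := ⟨(v, w), hvw⟩
    let p₁ := (hG d.fst w).some.toPath
    let p₂ := (hG v d'.snd).some.toPath
    have h₁ : p₁.1.length < Fintype.card V := p₁.2.length_lt
    have h₂ : p₂.1.length < Fintype.card V := p₂.2.length_lt
    let idle := 2 * Fintype.card V - (p₁.1.length + 1) - (p₂.1.length + 1)
    have hlen : p₁.1.length + 1 + idle + (p₂.1.length + 1) = 2 * Fintype.card V := by omega
    exact hlen ▸ ((reachIn_dependsOn_of_walk p₁.1 rfl (d' := g) rfl).trans
      (reachIn_dependsOn_self hv idle)).trans (reachIn_dependsOn_of_walk p₂.1 rfl rfl)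

variable [Fintype V] [DecidableRel G.Adj]

theorem sum_darts_eq_sum_sum_neighborFinset {M : Type*} [AddCommMonoid M] (F : V → V → M) :
    ∑ d : G.Dart, F d.fst d.snd = ∑ v, ∑ w ∈ G.neighborFinset v, F v w := by
  let e : G.Dart ≃ Σ v, G.neighborSet v :=
    { toFun d := ⟨d.fst, d.snd, d.adj⟩
      invFun p := ⟨(p.1, p.2), p.2.2⟩
      left_inv _ := rfl
      right_inv _ := rfl }
  refine (Fintype.sum_equiv e _ (fun p ↦ F p.1 p.2) fun _ ↦ rfl).trans ?_
  rw [Fintype.sum_sigma]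
  exact sum_congr rfl fun v _ ↦ (sum_subtype _ (fun w ↦ G.mem_neighborFinset v w) (F v)).symm

theorem sum_darts_fst {M : Type*} [AddCommMonoid M] (f : V → M) :
    ∑ d : G.Dart, f d.fst = ∑ v, G.degree v • f v := by
  simp [sum_darts_eq_sum_sum_neighborFinset fun v _ ↦ f v]

theorem sum_darts_symm {M : Type*} [AddCommMonoid M] (f : G.Dart → M) :
    ∑ d : G.Dart, f d.symm = ∑ d : G.Dart, f d :=
  Fintype.sum_bijective _ Dart.symm_involutive.bijective _ _ fun _ ↦ rfl

variable (G) in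
def IsAllFloatingSync (r r' : V → ℝ) (x : V → V → ℕ → ℝ) : Prop :=
  ∀ i j, G.Adj i j → ∀ t : ℕ,
    x i j (t + 1) = (1 - r i - r' i) * x i j t + r i * x j i t +
      (r' i / (G.degree i : ℝ)) * ∑ l ∈ G.neighborFinset i, x l i t

namespace IsAllFloatingSync

variable {r r' : V → ℝ} {x : V → V → ℕ → ℝ}

theorem neg (hx : IsAllFloatingSync G r r' x) : IsAllFloatingSync G r r' (-x) := by
  intro i j hij t
  simp only [Pi.neg_apply, hx i j hij t, sum_neg_distrib]
  ring

theorem sub_succ_eq (hx : IsAllFloatingSync G r r' x) {i j : V} (hij : G.Adj i j) (M : ℝ)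
    (t : ℕ) : M - x i j (t + 1) = (1 - r i - r' i) * (M - x i j t) + r i * (M - x j i t) +
      r' i / G.degree i * ∑ l ∈ G.neighborFinset i, (M - x l i t) := by
  have hdeg : (G.degree i : ℝ) ≠ 0 := by exact_mod_cast hij.degree_pos_left.ne'
  rw [hx i j hij t, sum_sub_distrib, sum_const, card_neighborFinset_eq_degree, nsmul_eq_mul]
  field_simp
  ring

theorem isMixing (hx : IsAllFloatingSync G r r' x) (hr : ∀ i, 0 ≤ r i) (hr' : ∀ i, 0 ≤ r' i)
    (hsum : ∀ i, r i + r' i ≤ 1) {ε : ℝ} (hε : ∀ i, ε ≤ r' i / G.degree i) :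
    IsMixing (Dart.DependsOn (G := G) fun i ↦ ε ≤ 1 - r i - r' i) ε
      fun t d ↦ x d.fst d.snd t := by
  rintro t ⟨⟨i, j⟩, hij⟩ d' hd' M hM
  have hgap : ∀ a b, G.Adj a b → 0 ≤ M - x a b t :=
    fun a b h ↦ sub_nonneg.2 (hM ⟨(a, b), h⟩)
  have hgap_sum : ∀ l ∈ G.neighborFinset i, 0 ≤ M - x l i t :=
    fun l hl ↦ hgap l i ((G.mem_neighborFinset i l).1 hl).symm
  have hw : 0 ≤ r' i / G.degree i := div_nonneg (hr' i) (Nat.cast_nonneg _)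
  have h₁ : 0 ≤ (1 - r i - r' i) * (M - x i j t) :=
    mul_nonneg (by linarith [hsum i]) (hgap i j hij)
  have h₂ : 0 ≤ r i * (M - x j i t) := mul_nonneg (hr i) (hgap j i hij.symm)
  have h₃ := mul_nonneg hw (sum_nonneg hgap_sum)
  dsimp only
  rw [hx.sub_succ_eq hij]
  rcases hd' with hd' | ⟨hlazy, rfl⟩
  · obtain ⟨⟨l, i'⟩, hli⟩ := d'
    change i' = i at hd'
    subst i'
    change G.Adj l i at hli
    have hl : l ∈ G.neighborFinset i := (G.mem_neighborFinset i l).2 hli.symm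
    calc ε * (M - x l i t) ≤ r' i / G.degree i * (M - x l i t) :=
          mul_le_mul_of_nonneg_right (hε i) (hgap l i hli)
      _ ≤ r' i / G.degree i * ∑ l ∈ G.neighborFinset i, (M - x l i t) :=
          mul_le_mul_of_nonneg_left (single_le_sum hgap_sum hl) hw
      _ ≤ _ := by linarith
  · calc ε * (M - x i j t) ≤ (1 - r i - r' i) * (M - x i j t) :=
          mul_le_mul_of_nonneg_right hlazy (hgap i j hij)
      _ ≤ _ := by linarith

theorem sum_darts_div_succ (hx : IsAllFloatingSync G r r' x) (hs : ∀ i, r i + r' i ≠ 0)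
    (t : ℕ) :
    ∑ d : G.Dart, x d.fst d.snd (t + 1) / (r d.fst + r' d.fst) =
      ∑ d : G.Dart, x d.fst d.snd t / (r d.fst + r' d.fst) := by
  have hstep : ∀ d : G.Dart, x d.fst d.snd (t + 1) / (r d.fst + r' d.fst) =
      x d.fst d.snd t / (r d.fst + r' d.fst) - x d.fst d.snd t +
        r d.fst / (r d.fst + r' d.fst) * x d.snd d.fst t +
        r' d.fst / G.degree d.fst / (r d.fst + r' d.fst) *
          ∑ l ∈ G.neighborFinset d.fst, x l d.fst t := fun d ↦ by
    have := hs d.fst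
    rw [hx _ _ d.adj t]
    field_simp
    ring
  -- Reindexed by reversed darts, the inflows `rᵢ x_{j,i}` and `rᵢ' / d(i) ∑ₗ x_{l,i}` become
  -- `(rⱼ + rⱼ') / (rⱼ + rⱼ') * x_{i,j}`, which cancels the loss `- x_{i,j}`.
  have hreturn : ∑ d : G.Dart, r d.fst / (r d.fst + r' d.fst) * x d.snd d.fst t =
      ∑ d : G.Dart, r d.snd / (r d.snd + r' d.snd) * x d.fst d.snd t :=
    (sum_darts_symm fun d ↦ r d.fst / (r d.fst + r' d.fst) * x d.snd d.fst t).symm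
  have hfloat : ∑ d : G.Dart, r' d.fst / G.degree d.fst / (r d.fst + r' d.fst) *
        ∑ l ∈ G.neighborFinset d.fst, x l d.fst t =
      ∑ d : G.Dart, r' d.snd / (r d.snd + r' d.snd) * x d.fst d.snd t := by
    calc _ = ∑ i, G.degree i • (r' i / G.degree i / (r i + r' i) *
            ∑ l ∈ G.neighborFinset i, x l i t) := sum_darts_fst _
      _ = ∑ i, ∑ l ∈ G.neighborFinset i, r' i / (r i + r' i) * x l i t := by
        refine sum_congr rfl fun i _ ↦ ?_
        rw [← mul_sum, nsmul_eq_mul]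
        rcases eq_or_ne (G.degree i) 0 with h | h
        · rw [← card_neighborFinset_eq_degree, card_eq_zero] at h
          simp [h]
        · field_simp
      _ = _ := (sum_darts_eq_sum_sum_neighborFinset _).symm
      _ = _ := sum_darts_symm fun d ↦ r' d.snd / (r d.snd + r' d.snd) * x d.fst d.snd t
  have hmass : ∑ d : G.Dart, (r d.snd / (r d.snd + r' d.snd) * x d.fst d.snd t +
      r' d.snd / (r d.snd + r' d.snd) * x d.fst d.snd t) = ∑ d : G.Dart, x d.fst d.snd t :=
    sum_congr rfl fun d _ ↦ by
      have := hs d.snd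
      field_simp
  rw [sum_congr rfl fun d _ ↦ hstep d]
  simp only [sum_add_distrib, sum_sub_distrib, hreturn, hfloat] at hmass ⊢
  linarith

theorem eq_weighted_average_of_tendsto (hx : IsAllFloatingSync G r r' x)
    (hs : ∀ i, 0 < r i + r' i) [Nonempty G.Dart] {k : V → ℝ}
    (hx0 : ∀ i j, G.Adj i j → x i j 0 = k i) {L : ℝ}
    (hL : ∀ d : G.Dart, Tendsto (fun t ↦ x d.fst d.snd t) atTop (𝓝 L)) :
    L = (∑ i, (G.degree i / (r i + r' i)) * k i) / ∑ i, (G.degree i : ℝ) / (r i + r' i) := by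
  have hconst : ∀ t, ∑ d : G.Dart, x d.fst d.snd t / (r d.fst + r' d.fst) =
      ∑ d : G.Dart, k d.fst / (r d.fst + r' d.fst) := by
    intro t
    induction t with
    | zero => exact sum_congr rfl fun d _ ↦ by rw [hx0 _ _ d.adj]
    | succ t ih => exact (hx.sum_darts_div_succ (fun i ↦ (hs i).ne') t).trans ih
  have hlim : Tendsto (fun t ↦ ∑ d : G.Dart, x d.fst d.snd t / (r d.fst + r' d.fst)) atTop
      (𝓝 (∑ d : G.Dart, L / (r d.fst + r' d.fst))) :=
    tendsto_finsetSum _ fun d _ ↦ (hL d).div_const _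
  have heq := tendsto_nhds_unique hlim (by simp only [hconst]; exact tendsto_const_nhds)
  rw [sum_darts_fst fun i ↦ L / (r i + r' i), sum_darts_fst fun i ↦ k i / (r i + r' i)] at heq
  obtain ⟨d⟩ := ‹Nonempty G.Dart›
  have hpos : 0 < ∑ i, (G.degree i : ℝ) / (r i + r' i) :=
    sum_pos' (fun i _ ↦ div_nonneg (Nat.cast_nonneg _) (hs i).le)
      ⟨d.fst, mem_univ _, div_pos (by exact_mod_cast d.adj.degree_pos_left) (hs _)⟩
  rw [eq_div_iff hpos.ne', mul_comm, sum_mul]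
  simp only [nsmul_eq_mul] at heq
  convert heq using 2 <;> ring

end IsAllFloatingSync

end SimpleGraph

theorem all_floating_sync_common_limit_general
    {V : Type*} [Fintype V]
    (G : SimpleGraph V) [DecidableRel G.Adj]
    (hconn : G.Connected)
    (k r r' : V → ℝ)
    (hr : ∀ i, 0 ≤ r i) (hr' : ∀ i, 0 < r' i) (hsum : ∀ i, r i + r' i ≤ 1)
    (hodd_or : (∃ (u : V) (w : G.Walk u u), w.IsCycle ∧ Odd w.length) ∨
      ∃ i, r i + r' i < 1)
    (x : V → V → ℕ → ℝ)
    (hx0 : ∀ i j, G.Adj i j → x i j 0 = k i)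
    (hrec : ∀ i j, G.Adj i j → ∀ t : ℕ,
      x i j (t + 1) = (1 - r i - r' i) * x i j t + r i * x j i t +
        (r' i / (G.degree i : ℝ)) * ∑ l ∈ G.neighborFinset i, x l i t) :
    ∀ i j, G.Adj i j →
      Filter.Tendsto (x i j) Filter.atTop
        (nhds ((∑ i : V, ((G.degree i : ℝ) / (r i + r' i)) * k i) /
          (∑ i : V, (G.degree i : ℝ) / (r i + r' i)))) := by
  intro i j hij
  have : Nontrivial V := ⟨i, j, hij.ne⟩
  have : Nonempty G.Dart := ⟨⟨(i, j), hij⟩⟩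
  have hx : G.IsAllFloatingSync r r' x := hrec
  have hw : ∀ v, 0 < r' v / G.degree v := fun v ↦
    div_pos (hr' v) (by exact_mod_cast hconn.preconnected.degree_pos_of_nontrivial v)
  obtain ⟨v₀, -, hv₀⟩ := exists_min_image univ (fun v ↦ r' v / G.degree v) univ_nonempty
  obtain ⟨ε, hε, hεw, hmix⟩ : ∃ ε > 0, (∀ v, ε ≤ r' v / G.degree v) ∧
      ((∃ (u : V) (c : G.Walk u u), Odd c.length) ∨ ∃ v, ε ≤ 1 - r v - r' v) := by
    rcases hodd_or with ⟨u, c, -, hc⟩ | ⟨v, hv⟩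
    · exact ⟨_, hw v₀, fun w ↦ hv₀ w (mem_univ w), .inl ⟨u, c, hc⟩⟩
    · exact ⟨min (r' v₀ / G.degree v₀) (1 - r v - r' v), lt_min (hw v₀) (by linarith),
        fun w ↦ (min_le_left _ _).trans (hv₀ w (mem_univ w)), .inr ⟨v, min_le_right _ _⟩⟩
  obtain ⟨N, hN⟩ := hconn.preconnected.exists_reachIn_dependsOn hmix
  have hr'₀ : ∀ v, 0 ≤ r' v := fun v ↦ (hr' v).le
  obtain ⟨L, hL⟩ := (hx.isMixing hr hr'₀ hsum hεw).exists_tendsto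
    (hx.neg.isMixing hr hr'₀ hsum hεw) hε (fun d ↦ ⟨d.symm, .inl rfl⟩) hN
  have hs : ∀ v, 0 < r v + r' v := fun v ↦ add_pos_of_nonneg_of_pos (hr v) (hr' v)
  rw [← hx.eq_weighted_average_of_tendsto hs hx0 hL]
  exact hL ⟨(i, j), hij⟩

/-- synchronous all-floating reciprocation on a finite connected
simple graph. If every agent has r_i' > 0 and r_i + r_i' ≤ 1, and the graph has
an odd cycle or some agent has r_i + r_i' < 1, then all action sequences on
edges converge to the common limit
L = (Σ_i (d(i)/(r_i+r_i'))·k_i) / (Σ_i d(i)/(r_i+r_i')). -/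
theorem all_floating_sync_common_limit
    {V : Type*} [Fintype V] [DecidableEq V]
    (G : SimpleGraph V) [DecidableRel G.Adj]
    (hconn : G.Connected) (hcard : 2 ≤ Fintype.card V)
    (k r r' : V → ℝ)
    (hr : ∀ i, 0 ≤ r i) (hr' : ∀ i, 0 < r' i) (hsum : ∀ i, r i + r' i ≤ 1)
    (hodd_or : (∃ (u : V) (w : G.Walk u u), w.IsCycle ∧ Odd w.length) ∨
      ∃ i, r i + r' i < 1)
    (x : V → V → ℕ → ℝ)
    (hx0 : ∀ i j, G.Adj i j → x i j 0 = k i)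
    (hrec : ∀ i j, G.Adj i j → ∀ t : ℕ,
      x i j (t + 1) = (1 - r i - r' i) * x i j t + r i * x j i t +
        (r' i / (G.degree i : ℝ)) * ∑ l ∈ G.neighborFinset i, x l i t) :
    ∀ i j, G.Adj i j →
      Filter.Tendsto (x i j) Filter.atTop
        (nhds ((∑ i : V, ((G.degree i : ℝ) / (r i + r' i)) * k i) /
          (∑ i : V, (G.degree i : ℝ) / (r i + r' i)))) :=
  all_floating_sync_common_limit_general G hconn k r r' hr hr' hsum hodd_or x hx0 hrec
end

section
/- In the two-agent fixed–floating model in which every agent acts at least once in every q consecutive time steps (for some natural number q ≥ 1), if agent 1 is fixed with 0 < r1 < 1 and agent 2 is floating with r2 > 0, then both x(t) and y(t) converge to k1 as t → ∞ (with no assumption that r1 + r2 ≤ 1). -/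
/-- two-agent fixed–floating model where each agent acts at least
once in every q consecutive time steps. If agent 1 is fixed with 0 < r1 < 1 and
agent 2 is floating with r2 > 0, then both sequences converge to k1 (without
assuming r1 + r2 ≤ 1). -/
theorem fixed_float_limit_k1_qfrequent
    (k1 k2 r1 r2 : ℝ) (hk : k1 ≤ k2)
    (hr1 : r1 ∈ Set.Icc (0:ℝ) 1) (hr2 : r2 ∈ Set.Icc (0:ℝ) 1)
    (hr1pos : 0 < r1) (hr1lt : r1 < 1) (hr2pos : 0 < r2)
    (T1 T2 : Set ℕ) (h01 : 0 ∈ T1) (h02 : 0 ∈ T2) (hU : T1 ∪ T2 = Set.univ)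
    (q : ℕ) (hq : 1 ≤ q)
    (hT1freq : ∀ t : ℕ, ∃ s ∈ T1, t ≤ s ∧ s < t + q)
    (hT2freq : ∀ t : ℕ, ∃ s ∈ T2, t ≤ s ∧ s < t + q)
    (x y : ℕ → ℝ) (hx0 : x 0 = k1) (hy0 : y 0 = k2)
    (hxn : ∀ t : ℕ, (t + 1) ∉ T1 → x (t + 1) = x t)
    (hyn : ∀ t : ℕ, (t + 1) ∉ T2 → y (t + 1) = y t)
    (hxa : ∀ t : ℕ, (t + 1) ∈ T1 → x (t + 1) = (1 - r1) * k1 + r1 * y t)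
    (hya : ∀ t : ℕ, (t + 1) ∈ T2 → y (t + 1) = (1 - r2) * y t + r2 * x t) :
    Filter.Tendsto x Filter.atTop (nhds k1) ∧
    Filter.Tendsto y Filter.atTop (nhds k1) := by
  obtain ⟨hr10, hr11⟩ := hr1
  obtain ⟨hr20, hr21⟩ := hr2
  set c : ℝ := 1 - r2 * (1 - r1) with hc
  have hc0 : 0 ≤ c := by nlinarith
  have hc1 : c < 1 := by nlinarith
  have hr1c : r1 ≤ c := by nlinarith
  set W : ℕ → ℝ := fun t => max (x t - k1) (y t - k1) with hWdef
  -- nonnegativity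
  have hnn : ∀ t, 0 ≤ x t - k1 ∧ 0 ≤ y t - k1 := by
    intro t
    induction t with
    | zero => refine ⟨by simp [hx0], by simp [hy0]; linarith⟩
    | succ n ih =>
      obtain ⟨ihx, ihy⟩ := ih
      constructor
      · by_cases h : (n + 1) ∈ T1
        · rw [hxa n h]; nlinarith
        · rw [hxn n h]; exact ihx
      · by_cases h : (n + 1) ∈ T2
        · rw [hya n h]; nlinarith
        · rw [hyn n h]; exact ihy
  have hWnn : ∀ t, 0 ≤ W t := fun t => le_trans (hnn t).1 (le_max_left _ _)
  have hxW : ∀ t, x t - k1 ≤ W t := fun t => le_max_left _ _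
  have hyW : ∀ t, y t - k1 ≤ W t := fun t => le_max_right _ _
  -- W is antitone
  have hWmono : ∀ t, W (t + 1) ≤ W t := by
    intro t
    apply max_le
    · by_cases h : (t + 1) ∈ T1
      · rw [hxa t h]
        have h1 := hyW t
        have h2 := hWnn t
        nlinarith
      · rw [hxn t h]; exact hxW t
    · by_cases h : (t + 1) ∈ T2
      · rw [hya t h]
        have h1 := hyW t
        have h2 := hxW t
        nlinarith
      · rw [hyn t h]; exact hyW t
  have hWanti : Antitone W := antitone_nat_of_succ_le hWmono
  -- after an action of agent 1 at time m+1, x stays within r1 * W m of k1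
  have key1 : ∀ m : ℕ, (m + 1) ∈ T1 → ∀ t, m + 1 ≤ t → x t - k1 ≤ r1 * W m := by
    intro m hm t ht
    induction t, ht using Nat.le_induction with
    | base =>
      rw [hxa m hm]
      have := hyW m
      nlinarith
    | succ t ht ih =>
      by_cases h : (t + 1) ∈ T1
      · rw [hxa t h]
        have h1 : y t - k1 ≤ W m := le_trans (hyW t) (hWanti (by omega))
        nlinarith
      · rw [hxn t h]; exact ih
  -- after a subsequent action of agent 2, both stay within c * W m
  have key2 : ∀ m m' : ℕ, (m + 1) ∈ T1 → (m' + 1) ∈ T2 → m + 1 ≤ m' →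
      ∀ t, m' + 1 ≤ t → x t - k1 ≤ c * W m ∧ y t - k1 ≤ c * W m := by
    intro m m' hm hm' hmm' t ht
    induction t, ht using Nat.le_induction with
    | base =>
      constructor
      · have := key1 m hm (m' + 1) (by omega)
        have := hWnn m
        nlinarith
      · rw [hya m' hm']
        have h1 : x m' - k1 ≤ r1 * W m := key1 m hm m' hmm'
        have h2 : y m' - k1 ≤ W m := le_trans (hyW m') (hWanti (by omega))
        have heq : c * W m = W m - r2 * W m + r2 * (r1 * W m) := by rw [hc]; ring
        nlinarith [mul_le_mul_of_nonneg_left h2 (by linarith : (0:ℝ) ≤ 1 - r2),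
          mul_le_mul_of_nonneg_left h1 hr20]
    | succ t ht ih =>
      obtain ⟨ihx, ihy⟩ := ih
      have hcW : 0 ≤ c * W m := mul_nonneg hc0 (hWnn m)
      constructor
      · by_cases h : (t + 1) ∈ T1
        · rw [hxa t h]; nlinarith
        · rw [hxn t h]; exact ihx
      · by_cases h : (t + 1) ∈ T2
        · rw [hya t h]
          have heq : c * W m = (1 - r2) * (c * W m) + r2 * (c * W m) := by ring
          nlinarith [mul_le_mul_of_nonneg_left ihy (by linarith : (0:ℝ) ≤ 1 - r2),
            mul_le_mul_of_nonneg_left ihx hr20]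
        · rw [hyn t h]; exact ihy
  -- contraction over windows of length 2q
  have contr : ∀ t0 : ℕ, W (t0 + 2 * q) ≤ c * W t0 := by
    intro t0
    obtain ⟨s, hsT, hs1, hs2⟩ := hT1freq (t0 + 1)
    obtain ⟨m, rfl⟩ : ∃ m, s = m + 1 := ⟨s - 1, by omega⟩
    obtain ⟨s', hs'T, hs'1, hs'2⟩ := hT2freq (m + 2)
    obtain ⟨m', rfl⟩ : ∃ m'', s' = m'' + 1 := ⟨s' - 1, by omega⟩
    have h := key2 m m' hsT hs'T (by omega) (t0 + 2 * q) (by omega)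
    have hWm : W m ≤ W t0 := hWanti (by omega)
    have : c * W m ≤ c * W t0 := mul_le_mul_of_nonneg_left hWm hc0
    exact max_le (by linarith [h.1]) (by linarith [h.2])
  -- geometric bound along multiples of 2q
  have geom : ∀ n : ℕ, W (2 * q * n) ≤ c ^ n * W 0 := by
    intro n
    induction n with
    | zero => simp
    | succ n ih =>
      have h1 : W (2 * q * (n + 1)) ≤ c * W (2 * q * n) := by
        have := contr (2 * q * n)
        have he : 2 * q * n + 2 * q = 2 * q * (n + 1) := by ring
        rwa [he] at this
      calc W (2 * q * (n + 1)) ≤ c * W (2 * q * n) := h1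
        _ ≤ c * (c ^ n * W 0) := mul_le_mul_of_nonneg_left ih hc0
        _ = c ^ (n + 1) * W 0 := by ring
  -- W tends to 0
  have hWlim : Filter.Tendsto W Filter.atTop (nhds 0) := by
    have hpow : Filter.Tendsto (fun n => c ^ n * W 0) Filter.atTop (nhds 0) := by
      have := (tendsto_pow_atTop_nhds_zero_of_lt_one hc0 hc1).mul_const (W 0)
      simpa using this
    rw [Metric.tendsto_atTop]
    intro ε hε
    obtain ⟨n, hn⟩ := (hpow.eventually (gt_mem_nhds hε)).exists
    refine ⟨2 * q * n, fun t ht => ?_⟩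
    rw [Real.dist_eq, sub_zero, abs_of_nonneg (hWnn t)]
    calc W t ≤ W (2 * q * n) := hWanti ht
      _ ≤ c ^ n * W 0 := geom n
      _ < ε := hn
  -- conclude
  constructor
  · rw [tendsto_iff_dist_tendsto_zero]
    apply squeeze_zero (fun t => dist_nonneg) (fun t => ?_) hWlim
    rw [Real.dist_eq, abs_of_nonneg (hnn t).1]
    exact hxW t
  · rw [tendsto_iff_dist_tendsto_zero]
    apply squeeze_zero (fun t => dist_nonneg) (fun t => ?_) hWlim
    rw [Real.dist_eq, abs_of_nonneg (hnn t).2]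
    exact hyW t
end

section
/- Let d > 0, c ≥ 0, S_d > 0, S_k ∈ ℝ, k ∈ ℝ, and 0 < a ≤ b, and define L : [a,b] → ℝ by L(r) = ((d/(r + c))·k + S_k) / (d/(r + c) + S_d). If S_k − k·S_d > 0, then L is strictly increasing on [a,b] and attains its maximum over [a,b] uniquely at r = b; if S_k − k·S_d < 0, then L is strictly decreasing on [a,b] and attains its maximum uniquely at r = a; and if S_k − k·S_d = 0, then L is constant on [a,b]. (Here L(r) is the common limit of synchronous all-floating reciprocation as a function of agent i's reciprocation coefficient r_i = r, with d = d(i), c = r_i', k = k_i, S_k = Σ_{j ≠ i} (d(j)/(r_j + r_j'))·k_j, and S_d = Σ_{j ≠ i} d(j)/(r_j + r_j').) -/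
/-- The common limit of synchronous all-floating reciprocation, as a function of
one agent's reciprocation coefficient r, with d = d(i), c = r_i', k = k_i,
Sk = Σ_{j ≠ i} (d(j)/(r_j+r_j'))·k_j and Sd = Σ_{j ≠ i} d(j)/(r_j+r_j'). -/
noncomputable def commonLimit (d c Sd Sk k : ℝ) (r : ℝ) : ℝ :=
  ((d / (r + c)) * k + Sk) / (d / (r + c) + Sd)

lemma commonLimit_sub (d c Sd Sk k r s : ℝ) (hd : 0 < d) (hSd : 0 < Sd)
    (hr : 0 < r + c) (hs : 0 < s + c) :
    commonLimit d c Sd Sk k s - commonLimit d c Sd Sk k r =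
      (Sk - k * Sd) * (d / (r + c) - d / (s + c)) /
        ((d / (r + c) + Sd) * (d / (s + c) + Sd)) := by
  have h1 : 0 < d / (r + c) + Sd := by positivity
  have h2 : 0 < d / (s + c) + Sd := by positivity
  unfold commonLimit
  field_simp
  ring

lemma commonLimit_diff_pos (d c Sd Sk k r s : ℝ) (hd : 0 < d) (hSd : 0 < Sd)
    (hr : 0 < r + c) (hs : 0 < s + c) (hrs : r < s) (hSk : 0 < Sk - k * Sd) :
    commonLimit d c Sd Sk k r < commonLimit d c Sd Sk k s := by
  have hx : d / (s + c) < d / (r + c) :=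
    div_lt_div_of_pos_left hd hr (by linarith)
  have h1 : 0 < d / (r + c) + Sd := by positivity
  have h2 : 0 < d / (s + c) + Sd := by positivity
  have := commonLimit_sub d c Sd Sk k r s hd hSd hr hs
  have hpos : 0 < (Sk - k * Sd) * (d / (r + c) - d / (s + c)) /
      ((d / (r + c) + Sd) * (d / (s + c) + Sd)) := by
    apply div_pos (mul_pos hSk (by linarith)) (mul_pos h1 h2)
  linarith

lemma commonLimit_diff_neg (d c Sd Sk k r s : ℝ) (hd : 0 < d) (hSd : 0 < Sd)
    (hr : 0 < r + c) (hs : 0 < s + c) (hrs : r < s) (hSk : Sk - k * Sd < 0) :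
    commonLimit d c Sd Sk k s < commonLimit d c Sd Sk k r := by
  have hx : d / (s + c) < d / (r + c) :=
    div_lt_div_of_pos_left hd hr (by linarith)
  have h1 : 0 < d / (r + c) + Sd := by positivity
  have h2 : 0 < d / (s + c) + Sd := by positivity
  have := commonLimit_sub d c Sd Sk k r s hd hSd hr hs
  have hneg : (Sk - k * Sd) * (d / (r + c) - d / (s + c)) /
      ((d / (r + c) + Sd) * (d / (s + c) + Sd)) < 0 := by
    apply div_neg_of_neg_of_pos (mul_neg_of_neg_of_pos hSk (by linarith))
      (mul_pos h1 h2)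
  linarith

/-- monotonicity of the common limit in one agent's reciprocation
coefficient over [a,b]: strictly increasing with unique maximum at b if
Sk − k·Sd > 0; strictly decreasing with unique maximum at a if Sk − k·Sd < 0;
constant if Sk − k·Sd = 0. -/
theorem commonLimit_monotonicity
    (d c Sd Sk k a b : ℝ)
    (hd : 0 < d) (hc : 0 ≤ c) (hSd : 0 < Sd)
    (ha : 0 < a) (hab : a ≤ b) :
    (0 < Sk - k * Sd →
      StrictMonoOn (commonLimit d c Sd Sk k) (Set.Icc a b) ∧
      ∀ r ∈ Set.Icc a b, r ≠ b →
        commonLimit d c Sd Sk k r < commonLimit d c Sd Sk k b) ∧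
    (Sk - k * Sd < 0 →
      StrictAntiOn (commonLimit d c Sd Sk k) (Set.Icc a b) ∧
      ∀ r ∈ Set.Icc a b, r ≠ a →
        commonLimit d c Sd Sk k r < commonLimit d c Sd Sk k a) ∧
    (Sk - k * Sd = 0 →
      ∀ r ∈ Set.Icc a b, commonLimit d c Sd Sk k r = commonLimit d c Sd Sk k a) := by
  have hpos : ∀ r ∈ Set.Icc a b, 0 < r + c := fun r hr => by
    have := hr.1; linarith
  refine ⟨fun hSk => ?_, fun hSk => ?_, fun hSk => ?_⟩
  · constructor
    · intro x hx y hy hxy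
      exact commonLimit_diff_pos d c Sd Sk k x y hd hSd (hpos x hx) (hpos y hy) hxy hSk
    · intro r hr hrb
      have hb : b ∈ Set.Icc a b := ⟨hab, le_refl b⟩
      exact commonLimit_diff_pos d c Sd Sk k r b hd hSd (hpos r hr) (hpos b hb)
        (lt_of_le_of_ne hr.2 hrb) hSk
  · constructor
    · intro x hx y hy hxy
      exact commonLimit_diff_neg d c Sd Sk k x y hd hSd (hpos x hx) (hpos y hy) hxy hSk
    · intro r hr hra
      have haI : a ∈ Set.Icc a b := ⟨le_refl a, hab⟩
      exact commonLimit_diff_neg d c Sd Sk k a r hd hSd (hpos a haI) (hpos r hr)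
        (lt_of_le_of_ne hr.1 (Ne.symm hra)) hSk
  · intro r hr
    have haI : a ∈ Set.Icc a b := ⟨le_refl a, hab⟩
    have := commonLimit_sub d c Sd Sk k a r hd hSd (hpos a haI) (hpos r hr)
    rw [hSk] at this
    simp at this
    linarith
end
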